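/- Let α, β be positive real affine roots with ℓ(s_α) = 2ht(α∨)−1 and ℓ(s_β) = 2ht(β∨)−1, such that s_α s_β ≠ s_β s_α, ℓ(s_α s_β) = ℓ(s_α) + ℓ(s_β), and α∨ + β∨ is not strictly less than c in the dominance order. Then α∨ + β∨ = c. -/
import Mathlib


/-- Elements of the affine root lattice (resp. affine coroot lattice) of the affine
(untwisted) Kac–Moody root system, written in coordinates with respect to the simple
roots `α_0, …, α_n` (resp. the simple coroots `α_0∨, …, α_n∨`).  The dominance
(partial) order `a ≤ b` (meaning `b - a` is a nonnegative combination of the simple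
roots/coroots) is the coordinatewise order. -/
abbrev AffLat (n : ℕ) := Fin (n + 1) → ℤ

/-- The `i`-th simple root (resp. simple coroot) as a coordinate vector. -/
def simpleVec {n : ℕ} (i : Fin (n + 1)) : AffLat n := Pi.single i 1

/-- The height of a root (resp. coroot): the sum of its coordinates in the basis of
simple roots (resp. simple coroots). -/
def htv {n : ℕ} (a : AffLat n) : ℤ := ∑ j, a j

/-- `a` is a simple root (a standard basis vector). -/
def IsSimpleVec {n : ℕ} (a : AffLat n) : Prop := ∃ i, a = simpleVec i

/-- Axiomatization of the affine (untwisted) Kac–Moody root system attached to a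
finite simple Lie algebra, together with its affine Weyl group `W` (a Coxeter group
with simple reflections `s_0, …, s_n`), its action on the root and coroot lattices,
the coroot map `α ↦ α∨` on real roots, the reflection map `α ↦ s_α`, and the
imaginary coroot `c = α_0∨ + θ∨`. -/
structure AffineRootSystem (n : ℕ) (W : Type*) [Group W] where
  /-- the affine Cartan matrix: `cartan i j = ⟨α_j, α_i∨⟩` -/
  cartan : Fin (n + 1) → Fin (n + 1) → ℤ
  cartan_diag : ∀ i, cartan i i = 2
  cartan_offdiag : ∀ i j, i ≠ j → cartan i j ≤ 0
  cartan_symm_zero : ∀ i j, cartan i j = 0 → cartan j i = 0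
  /-- the Coxeter matrix of the affine Weyl group -/
  M : CoxeterMatrix (Fin (n + 1))
  /-- the affine Weyl group, as a Coxeter system with simple reflections
  `cs.simple 0, …, cs.simple n` and Coxeter length `cs.length` -/
  cs : CoxeterSystem M W
  /-- the action of the affine Weyl group on the root lattice -/
  actR : W → AffLat n → AffLat n
  actR_one : ∀ a, actR 1 a = a
  actR_mul : ∀ u v a, actR (u * v) a = actR u (actR v a)
  actR_add : ∀ w a b, actR w (a + b) = actR w a + actR w b
  actR_simple : ∀ i a, actR (cs.simple i) a = a - (∑ k, cartan i k * a k) • simpleVec i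
  /-- the action of the affine Weyl group on the coroot lattice -/
  actC : W → AffLat n → AffLat n
  actC_one : ∀ b, actC 1 b = b
  actC_mul : ∀ u v b, actC (u * v) b = actC u (actC v b)
  actC_add : ∀ w a b, actC w (a + b) = actC w a + actC w b
  actC_simple : ∀ i b, actC (cs.simple i) b = b - (∑ k, cartan k i * b k) • simpleVec i
  /-- the coroot `α∨` of a real root `α` -/
  coroot : AffLat n → AffLat n
  coroot_simple : ∀ i, coroot (simpleVec i) = simpleVec i
  coroot_act : ∀ w a, coroot (actR w a) = actC w (coroot a)
  /-- the reflection `s_α ∈ W` of a real root `α` -/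
  refl : AffLat n → W
  refl_simple : ∀ i, refl (simpleVec i) = cs.simple i
  refl_act : ∀ w a, refl (actR w a) = w * refl a * w⁻¹
  /-- the coordinates of the imaginary coroot `c = α_0∨ + θ∨` in the basis of simple
  coroots; thus `imag 0 = 1` and `imag i = m_i` for `i ≥ 1`, where
  `θ∨ = m_1 α_1∨ + ⋯ + m_n α_n∨` -/
  imag : AffLat n
  imag_zero : imag 0 = 1
  imag_pos : ∀ i, 1 ≤ imag i
  imag_invariant : ∀ w, actC w imag = imag
  /-- the standard relation between lengths and positivity of roots:
  `ℓ(w s_α) < ℓ(w)` iff `w(α) < 0` -/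
  length_refl_lt_iff : ∀ a : AffLat n, (∃ w i, a = actR w (simpleVec i)) → 0 ≤ a →
    ∀ w : W, cs.length (w * refl a) < cs.length w ↔ actR w a ≤ 0

namespace AffineRootSystem

variable {n : ℕ} {W : Type*} [Group W] (R : AffineRootSystem n W)

/-- `α` is a positive real root of the affine root system. -/
def IsPosRoot (a : AffLat n) : Prop := (∃ w i, a = R.actR w (simpleVec i)) ∧ 0 ≤ a

/-- The evaluation pairing `⟨α, β∨⟩` of a root `α` (coordinates w.r.t. the simple
roots) against a coroot `β∨` (coordinates w.r.t. the simple coroots), computed via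
the affine Cartan matrix `cartan i k = ⟨α_k, α_i∨⟩`. -/
def pairing (a b : AffLat n) : ℤ := ∑ i, ∑ k, b i * (R.cartan i k * a k)

/-- `α` belongs to the set `Π̃` of positive real roots with `ℓ(s_α) = 2 ht(α∨) - 1`
(the roots appearing in the affine quantum Chevalley formula). -/
def IsChevalleyRoot (a : AffLat n) : Prop :=
  R.IsPosRoot a ∧ (R.cs.length (R.refl a) : ℤ) = 2 * htv (R.coroot a) - 1

end AffineRootSystem

namespace AffineRootSystem

variable {n : ℕ} {W : Type*} [Group W] (R : AffineRootSystem n W)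

/-- `a` is a real root. -/
def IsReal (a : AffLat n) : Prop := ∃ w i, a = R.actR w (simpleVec i)

section BasicVec

lemma simpleVec_apply (i k : Fin (n+1)) :
    simpleVec (n := n) i k = if k = i then 1 else 0 := by
  simp [simpleVec, Pi.single_apply]

lemma simpleVec_self (i : Fin (n+1)) : simpleVec (n := n) i i = 1 := by
  simp [simpleVec]

lemma simpleVec_ne (i k : Fin (n+1)) (h : k ≠ i) : simpleVec (n := n) i k = 0 := by
  simp [simpleVec_apply, h]

lemma simpleVec_nonneg (i : Fin (n+1)) : (0 : AffLat n) ≤ simpleVec i := by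
  intro k
  rw [simpleVec_apply]
  split <;> norm_num

lemma simpleVec_ne_zero (i : Fin (n+1)) : simpleVec (n := n) i ≠ 0 := by
  intro h
  have := congrFun h i
  rw [simpleVec_self] at this
  simp at this

lemma htv_add (a b : AffLat n) : htv (a + b) = htv a + htv b := by
  simp [htv, Finset.sum_add_distrib]

lemma htv_sub (a b : AffLat n) : htv (a - b) = htv a - htv b := by
  simp [htv, Finset.sum_sub_distrib]

lemma htv_smul (c : ℤ) (a : AffLat n) : htv (c • a) = c * htv a := by
  simp [htv, Finset.mul_sum]

lemma htv_simpleVec (i : Fin (n+1)) : htv (simpleVec (n := n) i) = 1 := by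
  simp [htv, simpleVec]

lemma htv_pos_of_nonneg_ne_zero {a : AffLat n} (h0 : 0 ≤ a) (hne : a ≠ 0) :
    1 ≤ htv a := by
  have : ∃ k, a k ≠ 0 := by
    by_contra h
    push_neg at h
    exact hne (funext fun k => h k)
  obtain ⟨k, hk⟩ := this
  have hk1 : 1 ≤ a k := lt_of_le_of_ne (h0 k) (Ne.symm hk)
  calc (1 : ℤ) ≤ a k := hk1
    _ ≤ ∑ j, a j := Finset.single_le_sum (fun j _ => h0 j) (Finset.mem_univ k)

lemma htv_nonpos_of_nonpos {a : AffLat n} (h0 : a ≤ 0) : htv a ≤ 0 :=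
  Finset.sum_nonpos (fun j _ => h0 j)

end BasicVec

section Pairing

lemma pairing_simpleVec_right (a : AffLat n) (i : Fin (n+1)) :
    R.pairing a (simpleVec i) = ∑ k, R.cartan i k * a k := by
  rw [pairing]
  rw [Finset.sum_eq_single i]
  · simp [simpleVec_self, Finset.mul_sum]
  · intro j _ hj
    simp [simpleVec_ne i j hj]
  · intro h
    exact absurd (Finset.mem_univ i) h

lemma pairing_simpleVec_left (b : AffLat n) (i : Fin (n+1)) :
    R.pairing (simpleVec i) b = ∑ k, R.cartan k i * b k := by
  rw [pairing]
  apply Finset.sum_congr rfl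
  intro j _
  rw [Finset.sum_eq_single i]
  · rw [simpleVec_self]; ring
  · intro k _ hk
    simp [simpleVec_ne i k hk]
  · intro h
    exact absurd (Finset.mem_univ i) h

lemma pairing_simple_simple (i : Fin (n+1)) :
    R.pairing (simpleVec i) (simpleVec i) = 2 := by
  rw [pairing_simpleVec_right]
  rw [Finset.sum_eq_single i]
  · rw [simpleVec_self, R.cartan_diag]; ring
  · intro k _ hk
    simp [simpleVec_ne i k hk]
  · intro h
    exact absurd (Finset.mem_univ i) h

lemma pairing_sub_left (a a' b : AffLat n) :
    R.pairing (a - a') b = R.pairing a b - R.pairing a' b := by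
  simp [pairing, mul_sub, Finset.sum_sub_distrib]

lemma pairing_sub_right (a b b' : AffLat n) :
    R.pairing a (b - b') = R.pairing a b - R.pairing a b' := by
  simp [pairing, sub_mul, Finset.sum_sub_distrib]

lemma pairing_add_right (a b b' : AffLat n) :
    R.pairing a (b + b') = R.pairing a b + R.pairing a b' := by
  simp [pairing, add_mul, Finset.sum_add_distrib]

lemma pairing_smul_left (c : ℤ) (a b : AffLat n) :
    R.pairing (c • a) b = c * R.pairing a b := by
  simp only [pairing, Pi.smul_apply, smul_eq_mul, Finset.mul_sum]
  apply Finset.sum_congr rfl; intro j _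
  apply Finset.sum_congr rfl; intro k _
  ring

lemma pairing_smul_right (c : ℤ) (a b : AffLat n) :
    R.pairing a (c • b) = c * R.pairing a b := by
  simp only [pairing, Pi.smul_apply, smul_eq_mul, Finset.mul_sum]
  apply Finset.sum_congr rfl; intro j _
  apply Finset.sum_congr rfl; intro k _
  ring

lemma pairing_eq_sum_left (a b : AffLat n) :
    R.pairing a b = ∑ k, a k * R.pairing (simpleVec k) b := by
  rw [pairing, Finset.sum_comm]
  apply Finset.sum_congr rfl
  intro k _
  rw [pairing_simpleVec_left, Finset.mul_sum]
  apply Finset.sum_congr rfl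
  intro j _
  ring

end Pairing

end AffineRootSystem

namespace AffineRootSystem

variable {n : ℕ} {W : Type*} [Group W] (R : AffineRootSystem n W)

section Actions

lemma actR_simple' (i : Fin (n+1)) (a : AffLat n) :
    R.actR (R.cs.simple i) a = a - (R.pairing a (simpleVec i)) • simpleVec i := by
  rw [R.actR_simple, pairing_simpleVec_right]

lemma actC_simple' (i : Fin (n+1)) (b : AffLat n) :
    R.actC (R.cs.simple i) b = b - (R.pairing (simpleVec i) b) • simpleVec i := by
  rw [R.actC_simple, pairing_simpleVec_left]

/-- `actR w` as an additive monoid hom. -/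
def actRHom (w : W) : AffLat n →+ AffLat n :=
  AddMonoidHom.mk' (R.actR w) (fun a b => R.actR_add w a b)

/-- `actC w` as an additive monoid hom. -/
def actCHom (w : W) : AffLat n →+ AffLat n :=
  AddMonoidHom.mk' (R.actC w) (fun a b => R.actC_add w a b)

lemma actR_neg (w : W) (a : AffLat n) : R.actR w (-a) = - R.actR w a :=
  (R.actRHom w).map_neg a

lemma actR_sub (w : W) (a b : AffLat n) : R.actR w (a - b) = R.actR w a - R.actR w b :=
  (R.actRHom w).map_sub a b

lemma actR_smul (w : W) (c : ℤ) (a : AffLat n) : R.actR w (c • a) = c • R.actR w a :=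
  map_zsmul (R.actRHom w) c a

lemma actC_neg (w : W) (b : AffLat n) : R.actC w (-b) = - R.actC w b :=
  (R.actCHom w).map_neg b

lemma actC_sub (w : W) (a b : AffLat n) : R.actC w (a - b) = R.actC w a - R.actC w b :=
  (R.actCHom w).map_sub a b

lemma actC_smul (w : W) (c : ℤ) (b : AffLat n) : R.actC w (c • b) = c • R.actC w b :=
  map_zsmul (R.actCHom w) c b

lemma actR_inv_actR (w : W) (a : AffLat n) : R.actR w⁻¹ (R.actR w a) = a := by
  rw [← R.actR_mul, inv_mul_cancel, R.actR_one]

lemma actR_actR_inv (w : W) (a : AffLat n) : R.actR w (R.actR w⁻¹ a) = a := by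
  rw [← R.actR_mul, mul_inv_cancel, R.actR_one]

lemma actR_eq_zero {w : W} {a : AffLat n} (h : R.actR w a = 0) : a = 0 := by
  have := congrArg (R.actR w⁻¹) h
  rw [actR_inv_actR] at this
  rw [this]
  have h0 := R.actR_add w⁻¹ 0 0
  rw [add_zero] at h0
  exact add_left_cancel (a := R.actR w⁻¹ 0) (by rw [add_zero, ← h0])

lemma actR_zero (w : W) : R.actR w 0 = 0 := by
  have h0 := R.actR_add w 0 0
  rw [add_zero] at h0
  exact add_left_cancel (a := R.actR w 0) (by rw [add_zero, ← h0])

lemma actR_ne_zero {a : AffLat n} (hr : R.IsReal a) (w : W) : R.actR w a ≠ 0 := by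
  obtain ⟨g, j, rfl⟩ := hr
  rw [← R.actR_mul]
  intro h
  have := R.actR_eq_zero h
  exact simpleVec_ne_zero j this

lemma actR_simple_apply_ne (i : Fin (n+1)) (a : AffLat n) {k : Fin (n+1)} (h : k ≠ i) :
    R.actR (R.cs.simple i) a k = a k := by
  rw [actR_simple']
  simp [simpleVec_ne i k h]

lemma actR_simple_apply_self (i : Fin (n+1)) (a : AffLat n) :
    R.actR (R.cs.simple i) a i = a i - R.pairing a (simpleVec i) := by
  rw [actR_simple']
  simp [simpleVec_self]

lemma actR_simple_simpleVec (i : Fin (n+1)) :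
    R.actR (R.cs.simple i) (simpleVec i) = - simpleVec i := by
  rw [actR_simple', pairing_simple_simple, two_smul]
  abel

lemma neg_isReal {a : AffLat n} (h : R.IsReal a) : R.IsReal (-a) := by
  obtain ⟨g, j, rfl⟩ := h
  refine ⟨g * R.cs.simple j, j, ?_⟩
  rw [R.actR_mul, actR_simple_simpleVec, actR_neg]

lemma pairing_actR_actC (w : W) :
    ∀ a b : AffLat n, R.pairing (R.actR w a) (R.actC w b) = R.pairing a b := by
  refine R.cs.simple_induction (p := fun w => ∀ a b : AffLat n,
      R.pairing (R.actR w a) (R.actC w b) = R.pairing a b) w (fun i a b => ?_)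
    (fun a b => by rw [R.actR_one, R.actC_one]) (fun w w' h h' a b => ?_)
  · rw [actR_simple', actC_simple', pairing_sub_left, pairing_sub_right, pairing_sub_right,
      pairing_smul_left, pairing_smul_right, pairing_smul_right, pairing_smul_left,
      pairing_simple_simple]
    ring
  · rw [R.actR_mul, R.actC_mul, h, h']

lemma pairing_actR_inv (w : W) (a b : AffLat n) :
    R.pairing (R.actR w⁻¹ a) b = R.pairing a (R.actC w b) := by
  have := R.pairing_actR_actC w (R.actR w⁻¹ a) b
  rw [actR_actR_inv] at this
  exact this.symm

lemma coroot_real {a : AffLat n} {g : W} {j : Fin (n+1)}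
    (h : a = R.actR g (simpleVec j)) : R.coroot a = R.actC g (simpleVec j) := by
  rw [h, R.coroot_act, R.coroot_simple]

lemma actR_refl {a : AffLat n} (hr : R.IsReal a) (x : AffLat n) :
    R.actR (R.refl a) x = x - (R.pairing x (R.coroot a)) • a := by
  obtain ⟨g, j, rfl⟩ := hr
  rw [R.refl_act, R.refl_simple, R.actR_mul, R.actR_mul, actR_simple', actR_sub, actR_smul,
    actR_actR_inv, pairing_actR_inv, R.coroot_act, R.coroot_simple]

lemma actC_refl {a : AffLat n} (hr : R.IsReal a) (y : AffLat n) :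
    R.actC (R.refl a) y = y - (R.pairing a y) • (R.coroot a) := by
  obtain ⟨g, j, rfl⟩ := hr
  rw [R.refl_act, R.refl_simple, R.coroot_act, R.coroot_simple, R.actC_mul, R.actC_mul,
    actC_simple', actC_sub, actC_smul]
  congr 1
  · rw [← R.actC_mul, mul_inv_cancel, R.actC_one]
  · congr 1
    have := R.pairing_actR_actC g (simpleVec j) (R.actC g⁻¹ y)
    rw [← R.actC_mul, mul_inv_cancel, R.actC_one] at this
    rw [this]

lemma pairing_coroot_self {a : AffLat n} (hr : R.IsReal a) :
    R.pairing a (R.coroot a) = 2 := by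
  obtain ⟨g, j, rfl⟩ := hr
  rw [R.coroot_act, R.coroot_simple, pairing_actR_actC, pairing_simple_simple]

lemma refl_mul_self {a : AffLat n} (hr : R.IsReal a) : R.refl a * R.refl a = 1 := by
  obtain ⟨g, j, rfl⟩ := hr
  rw [R.refl_act, R.refl_simple]
  simp only [mul_assoc, inv_mul_cancel_left]
  rw [R.cs.simple_mul_simple_cancel_left, mul_inv_cancel]

lemma refl_inv {a : AffLat n} (hr : R.IsReal a) : (R.refl a)⁻¹ = R.refl a := by
  rw [eq_comm, eq_inv_iff_mul_eq_one, refl_mul_self R hr]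

lemma actR_refl_self {a : AffLat n} (hr : R.IsReal a) :
    R.actR (R.refl a) a = -a := by
  rw [actR_refl R hr, pairing_coroot_self R hr, two_smul]
  abel

lemma length_refl_odd {a : AffLat n} (hr : R.IsReal a) :
    R.cs.length (R.refl a) % 2 = 1 := by
  obtain ⟨g, j, rfl⟩ := hr
  rw [R.refl_act, R.refl_simple]
  have h1 := R.cs.length_mul_mod_two (g * R.cs.simple j) g⁻¹
  have h2 := R.cs.length_mul_mod_two g (R.cs.simple j)
  rw [R.cs.length_simple] at h2
  rw [R.cs.length_inv] at h1
  omega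

lemma length_refl_pos {a : AffLat n} (hr : R.IsReal a) :
    1 ≤ R.cs.length (R.refl a) := by
  have := R.length_refl_odd hr
  omega

lemma refl_ne_one {a : AffLat n} (hr : R.IsReal a) : R.refl a ≠ 1 := by
  intro h
  have := R.length_refl_pos hr
  rw [h, R.cs.length_one] at this
  omega

lemma length_refl_gt_iff {a : AffLat n} (hr : R.IsReal a) (hpos : 0 ≤ a) (w : W) :
    R.cs.length w < R.cs.length (w * R.refl a) ↔ 0 ≤ R.actR w a := by
  have h := R.length_refl_lt_iff a hr hpos (w * R.refl a)
  rw [mul_assoc, refl_mul_self R hr, mul_one, R.actR_mul, actR_refl_self R hr, actR_neg] at h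
  rw [h, neg_nonpos]

lemma sign_trichotomy {a : AffLat n} (hr : R.IsReal a) (hpos : 0 ≤ a) (w : W) :
    (R.actR w a ≤ 0 ∧ ¬ (0:AffLat n) ≤ R.actR w a
      ∧ R.cs.length (w * R.refl a) < R.cs.length w)
    ∨ (0 ≤ R.actR w a ∧ ¬ R.actR w a ≤ (0:AffLat n)
      ∧ R.cs.length w < R.cs.length (w * R.refl a)) := by
  have hne : R.cs.length (w * R.refl a) ≠ R.cs.length w := by
    have h1 := R.cs.length_mul_mod_two w (R.refl a)
    have h2 := R.length_refl_odd hr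
    omega
  have hz : R.actR w a ≠ 0 := R.actR_ne_zero hr w
  rcases lt_or_gt_of_ne hne with h | h
  · left
    have hs := (R.length_refl_lt_iff a hr hpos w).mp h
    exact ⟨hs, fun h0 => hz (le_antisymm hs h0), h⟩
  · right
    have hs := (R.length_refl_gt_iff hr hpos w).mp h
    exact ⟨hs, fun h0 => hz (le_antisymm h0 hs), h⟩

end Actions

end AffineRootSystem

namespace AffineRootSystem

variable {n : ℕ} {W : Type*} [Group W] (R : AffineRootSystem n W)

section Tools

lemma isReal_simple (i : Fin (n+1)) : R.IsReal (simpleVec i) :=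
  ⟨1, i, by rw [R.actR_one]⟩

lemma isReal_actR {a : AffLat n} (h : R.IsReal a) (w : W) : R.IsReal (R.actR w a) := by
  obtain ⟨g, j, rfl⟩ := h
  exact ⟨w * g, j, by rw [R.actR_mul]⟩

lemma sub_smul_simpleVec_apply (x : AffLat n) (c : ℤ) (i k : Fin (n+1)) :
    (x - c • simpleVec i) k = x k - (if k = i then c else 0) := by
  rw [Pi.sub_apply, Pi.smul_apply, simpleVec_apply, smul_eq_mul]
  split <;> ring

lemma add_smul_simpleVec_apply (x : AffLat n) (c : ℤ) (i k : Fin (n+1)) :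
    (x + c • simpleVec i) k = x k + (if k = i then c else 0) := by
  rw [Pi.add_apply, Pi.smul_apply, simpleVec_apply, smul_eq_mul]
  split <;> ring

lemma simpleVec_sub_smul_apply (i : Fin (n+1)) (p : ℤ) (a : AffLat n) (k : Fin (n+1)) :
    (simpleVec i - p • a) k = (if k = i then 1 else 0) - p * a k := by
  rw [Pi.sub_apply, simpleVec_apply, Pi.smul_apply, smul_eq_mul]

lemma dvd_actR (t : ℤ) (w : W) :
    ∀ a : AffLat n, (∀ k, t ∣ a k) → ∀ k, t ∣ R.actR w a k := by
  refine R.cs.simple_induction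
    (p := fun w => ∀ a : AffLat n, (∀ k, t ∣ a k) → ∀ k, t ∣ R.actR w a k) w ?_ ?_ ?_
  · intro i a ha k
    by_cases h : k = i
    · subst h
      rw [actR_simple_apply_self]
      apply dvd_sub (ha k)
      rw [pairing_simpleVec_right]
      exact Finset.dvd_sum fun m _ => Dvd.dvd.mul_left (ha m) _
    · rw [R.actR_simple_apply_ne i a h]
      exact ha k
  · intro a ha k
    rw [R.actR_one]
    exact ha k
  · intro w w' hw hw' a ha k
    rw [R.actR_mul]
    exact hw _ (hw' a ha) k

lemma eq_simpleVec_of_supp_subset {a : AffLat n} (hr : R.IsReal a) (hpos : 0 ≤ a)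
    (i : Fin (n+1)) (hsupp : ∀ k, k ≠ i → a k = 0) : a = simpleVec i := by
  obtain ⟨g, j, hgj⟩ := hr
  have hne : a ≠ 0 := by
    intro h0
    exact R.actR_ne_zero ⟨1, j, by rw [R.actR_one]⟩ g (by rw [← hgj, h0])
  have hai : a i ≠ 0 := by
    intro h0
    exact hne (funext fun k => by
      by_cases h : k = i
      · rw [h, h0]; rfl
      · rw [hsupp k h]; rfl)
  have hai1 : 1 ≤ a i := lt_of_le_of_ne (hpos i) (Ne.symm hai)
  have hdvd : ∀ k, (a i) ∣ a k := by
    intro k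
    by_cases h : k = i
    · rw [h]
    · rw [hsupp k h]; exact dvd_zero _
  have hinv : R.actR g⁻¹ a = simpleVec j := by rw [hgj, actR_inv_actR]
  have h1 : (a i) ∣ 1 := by
    have := R.dvd_actR (a i) g⁻¹ a hdvd j
    rwa [hinv, simpleVec_self] at this
  have : a i = 1 := by
    rcases Int.isUnit_iff.mp (isUnit_of_dvd_one h1) with h | h
    · exact h
    · omega
  funext k
  by_cases h : k = i
  · rw [h, this, simpleVec_self]
  · rw [hsupp k h, simpleVec_ne i k h]

lemma coord_pos_of_pairing_pos {z : AffLat n} (hz : 0 ≤ z) {i : Fin (n+1)}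
    (hp : 1 ≤ R.pairing (simpleVec i) z) : 1 ≤ z i := by
  rw [pairing_simpleVec_left] at hp
  have hsplit := Finset.add_sum_erase Finset.univ (fun k => R.cartan k i * z k)
    (Finset.mem_univ i)
  have hrest : ∑ k ∈ Finset.univ.erase i, R.cartan k i * z k ≤ 0 := by
    apply Finset.sum_nonpos
    intro k hk
    have hki : k ≠ i := (Finset.mem_erase.mp hk).1
    exact mul_nonpos_iff.mpr (Or.inr ⟨R.cartan_offdiag k i hki, hz k⟩)
  rw [R.cartan_diag] at hsplit
  linarith [hsplit]

lemma pairing_simpleVec_imag (i : Fin (n+1)) :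
    R.pairing (simpleVec i) R.imag = 0 := by
  have h := R.imag_invariant (R.cs.simple i)
  rw [actC_simple'] at h
  have h2 : (R.pairing (simpleVec i) R.imag) • simpleVec i = 0 := by
    have := sub_eq_self.mp h
    exact this
  have h3 := congrFun h2 i
  rw [Pi.smul_apply, simpleVec_self, Pi.zero_apply, smul_eq_mul, mul_one] at h3
  exact h3

lemma length_refl_simple_comm {a : AffLat n} (hr : R.IsReal a) (i : Fin (n+1)) :
    R.cs.length (R.cs.simple i * R.refl a) = R.cs.length (R.refl a * R.cs.simple i) := by
  have h := R.cs.length_inv (R.cs.simple i * R.refl a)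
  rw [mul_inv_rev, R.cs.inv_simple, refl_inv R hr] at h
  exact h.symm

lemma length_mul_simple_of_lt {w : W} {i : Fin (n+1)}
    (h : R.cs.length (w * R.cs.simple i) < R.cs.length w) :
    R.cs.length (w * R.cs.simple i) + 1 = R.cs.length w := by
  rcases R.cs.length_mul_simple w i with h' | h'
  · omega
  · exact h'

lemma length_mul_simple_of_not_lt {w : W} {i : Fin (n+1)}
    (h : ¬ R.cs.length (w * R.cs.simple i) < R.cs.length w) :
    R.cs.length (w * R.cs.simple i) = R.cs.length w + 1 := by
  rcases R.cs.length_mul_simple w i with h' | h'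
  · exact h'
  · omega

end Tools

end AffineRootSystem

namespace AffineRootSystem

variable {n : ℕ} {W : Type*} [Group W] (R : AffineRootSystem n W)

section DescentStep

/-- Core descent analysis: given a right descent `i` of `s_a` with `a` not the
simple root `α_i`, produce the reflected root with all its data. -/
lemma descent_step {a : AffLat n} (hr : R.IsReal a) (hpos : 0 ≤ a) {i : Fin (n+1)}
    (hi : R.cs.length (R.refl a * R.cs.simple i) < R.cs.length (R.refl a))
    (hne : a ≠ simpleVec i) :
    1 ≤ R.pairing (simpleVec i) (R.coroot a) ∧ 1 ≤ a i
    ∧ R.IsReal (R.actR (R.cs.simple i) a) ∧ 0 ≤ R.actR (R.cs.simple i) a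
    ∧ R.refl (R.actR (R.cs.simple i) a) = R.cs.simple i * R.refl a * R.cs.simple i
    ∧ R.cs.length (R.refl (R.actR (R.cs.simple i) a)) + 2 = R.cs.length (R.refl a)
    ∧ R.coroot (R.actR (R.cs.simple i) a)
        = R.coroot a - (R.pairing (simpleVec i) (R.coroot a)) • simpleVec i := by
  have hta : R.actR (R.refl a) (simpleVec i) ≤ 0 := by
    refine (R.length_refl_lt_iff (simpleVec i) (R.isReal_simple i)
      (simpleVec_nonneg i) (R.refl a)).mp ?_
    rw [R.refl_simple]
    exact hi
  set p := R.pairing (simpleVec i) (R.coroot a) with hp_def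
  have hform : R.actR (R.refl a) (simpleVec i) = simpleVec i - p • a :=
    R.actR_refl hr (simpleVec i)
  have hcoordi : (1:ℤ) - p * a i ≤ 0 := by
    have h := hta i
    rw [hform, simpleVec_sub_smul_apply, if_pos rfl] at h
    exact h
  have h1 : 1 ≤ p * a i := by linarith
  have hposi : (0:ℤ) ≤ a i := hpos i
  have hp1 : 1 ≤ p := by
    by_contra h
    push_neg at h
    have hp0 : p ≤ 0 := by omega
    have : p * a i ≤ 0 := mul_nonpos_iff.mpr (Or.inr ⟨hp0, hposi⟩)
    omega
  have hai1 : 1 ≤ a i := by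
    by_contra h
    push_neg at h
    have ha0 : a i = 0 := by omega
    rw [ha0, mul_zero] at h1
    omega
  -- a has support off i
  have hsupp : ∃ k, k ≠ i ∧ a k ≠ 0 := by
    by_contra h
    push_neg at h
    exact hne (R.eq_simpleVec_of_supp_subset hr hpos i
      (fun k hk => by by_contra h2; exact h2 (h k hk)))
  obtain ⟨k₀, hk₀ne, hk₀⟩ := hsupp
  set a' := R.actR (R.cs.simple i) a with ha'
  have hr' : R.IsReal a' := R.isReal_actR hr _
  have ha'k₀ : a' k₀ = a k₀ := R.actR_simple_apply_ne i a hk₀ne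
  have hk₀pos : 1 ≤ a k₀ := lt_of_le_of_ne (hpos k₀) (Ne.symm hk₀)
  have ha'pos : 0 ≤ a' := by
    rcases R.sign_trichotomy hr hpos (R.cs.simple i) with ⟨hle, _, _⟩ | ⟨hge, _, _⟩
    · exfalso
      have h2 := hle k₀
      simp only [Pi.zero_apply] at h2
      rw [← ha', ha'k₀] at h2
      omega
    · rw [← ha'] at hge
      exact hge
  have hrefl' : R.refl a' = R.cs.simple i * R.refl a * R.cs.simple i := by
    rw [ha', R.refl_act, R.cs.inv_simple]
  have ht's : R.refl a' * R.cs.simple i = R.cs.simple i * R.refl a := by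
    rw [hrefl', mul_assoc, R.cs.simple_mul_simple_self, mul_one]
  have e1 : R.actR (R.cs.simple i) (simpleVec i) = -simpleVec i := R.actR_simple_simpleVec i
  have hX : R.actR (R.refl a') (simpleVec i) = simpleVec i + p • a' := by
    have e2 : R.actR (R.refl a) (-simpleVec i) = -(simpleVec i - p • a) := by
      rw [actR_neg, hform]
    have e3 : R.actR (R.cs.simple i) (-(simpleVec i - p • a))
        = -(-(simpleVec i) - p • a') := by
      rw [actR_neg, actR_sub, actR_smul, e1, ← ha']
    rw [hrefl', mul_assoc, R.actR_mul, R.actR_mul, e1, e2, e3]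
    abel
  have hgtX : R.cs.length (R.refl a') < R.cs.length (R.refl a' * R.cs.simple i) := by
    have h0 : (0:AffLat n) ≤ simpleVec i + p • a' := by
      intro k
      have h1' := ha'pos k
      have h2' := simpleVec_nonneg (n := n) i k
      simp only [Pi.zero_apply] at h1' h2'
      have h3' : 0 ≤ p * a' k := mul_nonneg (by linarith) h1'
      rw [Pi.add_apply, Pi.smul_apply, smul_eq_mul, Pi.zero_apply]
      linarith
    have h4 := (R.length_refl_gt_iff (R.isReal_simple i) (simpleVec_nonneg i)
      (R.refl a')).mpr (by rw [hX]; exact h0)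
    rwa [R.refl_simple] at h4
  have hlen2 : R.cs.length (R.refl a') + 2 = R.cs.length (R.refl a) := by
    have e4 : R.cs.length (R.refl a' * R.cs.simple i)
        = R.cs.length (R.refl a * R.cs.simple i) := by
      rw [ht's, length_refl_simple_comm R hr]
    have e5 : R.cs.length (R.refl a' * R.cs.simple i) = R.cs.length (R.refl a') + 1 := by
      rcases R.cs.length_mul_simple (R.refl a') i with h | h
      · exact h
      · omega
    have e6 := R.length_mul_simple_of_lt hi
    omega
  have hcor' : R.coroot a' = R.coroot a - p • simpleVec i := by
    rw [ha', R.coroot_act, actC_simple']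
  exact ⟨hp1, hai1, hr', ha'pos, hrefl', hlen2, hcor'⟩

/-- Key inequality: `ℓ(s_a) ≤ 2 ht(a∨) - 1`, positivity of the coroot,
and support inclusion. -/
lemma lemA : ∀ (L : ℕ), ∀ {a : AffLat n}, R.IsReal a → 0 ≤ a →
    R.cs.length (R.refl a) ≤ L →
    ((R.cs.length (R.refl a) : ℤ) ≤ 2 * htv (R.coroot a) - 1
      ∧ 0 ≤ R.coroot a
      ∧ (∀ k, a k ≠ 0 → R.coroot a k ≠ 0)) := by
  intro L
  induction L with
  | zero =>
    intro a hr hpos hL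
    exact absurd hL (by have := R.length_refl_pos hr; omega)
  | succ L ih =>
    intro a hr hpos hL
    obtain ⟨i, hi⟩ := R.cs.exists_rightDescent_of_ne_one (R.refl_ne_one hr)
    have hi' : R.cs.length (R.refl a * R.cs.simple i) < R.cs.length (R.refl a) := hi
    by_cases hne : a = simpleVec i
    · subst hne
      rw [R.coroot_simple, R.refl_simple, R.cs.length_simple, htv_simpleVec]
      refine ⟨by norm_num, simpleVec_nonneg i, ?_⟩
      intro k hk
      by_cases h : k = i
      · subst h; rw [simpleVec_self]; norm_num
      · exact absurd (simpleVec_ne i k h) hk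
    · obtain ⟨hp1, hai1, hr', ha'pos, hrefl', hlen2, hcor'⟩ :=
        R.descent_step hr hpos hi' hne
      set p := R.pairing (simpleVec i) (R.coroot a) with hp_def
      set a' := R.actR (R.cs.simple i) a with ha'
      have hlenle : R.cs.length (R.refl a') ≤ L := by omega
      obtain ⟨ihA, ihPos, ihSupp⟩ := ih hr' ha'pos hlenle
      have hht : htv (R.coroot a') = htv (R.coroot a) - p := by
        rw [hcor', htv_sub, htv_smul, htv_simpleVec, mul_one]
      have hcoordeq : ∀ k, R.coroot a k = R.coroot a' k + (if k = i then p else 0) := by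
        intro k
        have := congrFun hcor' k
        rw [sub_smul_simpleVec_apply] at this
        omega
      refine ⟨?_, ?_, ?_⟩
      · rw [hht] at ihA
        have : (R.cs.length (R.refl a') : ℤ) + 2 = (R.cs.length (R.refl a) : ℤ) := by
          exact_mod_cast hlen2
        linarith
      · intro k
        have h2 := ihPos k
        have h3 := hcoordeq k
        rw [Pi.zero_apply] at h2 ⊢
        by_cases h : k = i
        · rw [h3, if_pos h]; linarith
        · rw [h3, if_neg h]; linarith
      · intro k hk
        by_cases h : k = i
        · have h2 := ihPos k
          rw [Pi.zero_apply] at h2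
          rw [hcoordeq k, if_pos h]
          intro hcontra
          linarith
        · have ha'k : a' k = a k := R.actR_simple_apply_ne i a h
          have h5 := ihSupp k (by rw [ha'k]; exact hk)
          rw [hcoordeq k, if_neg h]
          omega

end DescentStep

end AffineRootSystem

namespace AffineRootSystem

variable {n : ℕ} {W : Type*} [Group W] (R : AffineRootSystem n W)

section Chev

lemma coroot_nonneg {a : AffLat n} (hr : R.IsReal a) (hpos : 0 ≤ a) :
    0 ≤ R.coroot a :=
  (R.lemA (R.cs.length (R.refl a)) hr hpos le_rfl).2.1

lemma coroot_supp {a : AffLat n} (hr : R.IsReal a) (hpos : 0 ≤ a) :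
    ∀ k, a k ≠ 0 → R.coroot a k ≠ 0 :=
  (R.lemA (R.cs.length (R.refl a)) hr hpos le_rfl).2.2

lemma lemA' {a : AffLat n} (hr : R.IsReal a) (hpos : 0 ≤ a) :
    (R.cs.length (R.refl a) : ℤ) ≤ 2 * htv (R.coroot a) - 1 :=
  (R.lemA (R.cs.length (R.refl a)) hr hpos le_rfl).1

lemma cartan_ne_symm {i j : Fin (n+1)} (h : R.cartan i j ≠ 0) : R.cartan j i ≠ 0 :=
  fun h0 => h (R.cartan_symm_zero j i h0)

/-- Chevalley descent package. -/
lemma chev_descent {a : AffLat n} (ha : R.IsChevalleyRoot a) {i : Fin (n+1)}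
    (hi : R.cs.length (R.refl a * R.cs.simple i) < R.cs.length (R.refl a))
    (hne : a ≠ simpleVec i) :
    R.pairing (simpleVec i) (R.coroot a) = 1
    ∧ R.IsChevalleyRoot (R.actR (R.cs.simple i) a)
    ∧ R.coroot (R.actR (R.cs.simple i) a) = R.coroot a - (1:ℤ) • simpleVec i
    ∧ R.refl (R.actR (R.cs.simple i) a) = R.cs.simple i * R.refl a * R.cs.simple i
    ∧ R.cs.length (R.refl (R.actR (R.cs.simple i) a)) + 2 = R.cs.length (R.refl a)
    ∧ htv (R.coroot (R.actR (R.cs.simple i) a)) = htv (R.coroot a) - 1 := by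
  obtain ⟨⟨hr, hpos⟩, hchev⟩ := ha
  obtain ⟨hp1, hai1, hr', ha'pos, hrefl', hlen2, hcor'⟩ := R.descent_step hr hpos hi hne
  set p := R.pairing (simpleVec i) (R.coroot a) with hp_def
  set a' := R.actR (R.cs.simple i) a with ha'def
  have hht : htv (R.coroot a') = htv (R.coroot a) - p := by
    rw [hcor', htv_sub, htv_smul, htv_simpleVec, mul_one]
  have hA' := R.lemA' hr' ha'pos
  have hcast : (R.cs.length (R.refl a') : ℤ) + 2 = (R.cs.length (R.refl a) : ℤ) := by
    exact_mod_cast hlen2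
  have hpeq : p = 1 := by
    rw [hht] at hA'
    omega
  have hchev' : (R.cs.length (R.refl a') : ℤ) = 2 * htv (R.coroot a') - 1 := by
    rw [hht, hpeq]
    omega
  rw [hpeq] at hcor' hht
  exact ⟨hpeq, ⟨⟨hr', ha'pos⟩, hchev'⟩, hcor', hrefl', hlen2, by omega⟩

lemma chev_coroot_coord {a : AffLat n} {i : Fin (n+1)}
    (hcor' : R.coroot (R.actR (R.cs.simple i) a) = R.coroot a - (1:ℤ) • simpleVec i) :
    ∀ k, R.coroot a k = R.coroot (R.actR (R.cs.simple i) a) k + (if k = i then 1 else 0) := by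
  intro k
  have := congrFun hcor' k
  rw [sub_smul_simpleVec_apply] at this
  split <;> omega

/-- Chevalley coroots are dominated by the imaginary coroot. -/
lemma chev_coroot_le_imag : ∀ (L : ℕ), ∀ {a : AffLat n}, R.IsChevalleyRoot a →
    R.cs.length (R.refl a) ≤ L → R.coroot a ≤ R.imag := by
  intro L
  induction L with
  | zero =>
    intro a ha hL
    exact absurd hL (by have := R.length_refl_pos ha.1.1; omega)
  | succ L ih =>
    intro a ha hL
    obtain ⟨i, hi⟩ := R.cs.exists_rightDescent_of_ne_one (R.refl_ne_one ha.1.1)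
    have hi' : R.cs.length (R.refl a * R.cs.simple i) < R.cs.length (R.refl a) := hi
    by_cases hne : a = simpleVec i
    · rw [hne, R.coroot_simple]
      rw [Pi.le_def]
      intro k
      have h2 := R.imag_pos k
      rw [simpleVec_apply]
      split <;> omega
    · obtain ⟨hpeq, ha', hcor', hrefl', hlen2, hht⟩ := R.chev_descent ha hi' hne
      have hIH := ih ha' (by omega)
      have hIH' := hIH
      rw [Pi.le_def] at hIH'
      have hz0 : (0:AffLat n) ≤ R.imag - R.coroot (R.actR (R.cs.simple i) a) :=
        sub_nonneg.mpr hIH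
      have hpz : R.pairing (simpleVec i)
          (R.imag - R.coroot (R.actR (R.cs.simple i) a)) = 1 := by
        rw [pairing_sub_right, pairing_simpleVec_imag, hcor', pairing_sub_right,
          pairing_smul_right, pairing_simple_simple, hpeq]
        ring
      have hzi := R.coord_pos_of_pairing_pos hz0 (by rw [hpz])
      rw [Pi.sub_apply] at hzi
      have hcoord := R.chev_coroot_coord hcor'
      rw [Pi.le_def]
      intro k
      have h2 := hIH' k
      have h3 := hcoord k
      by_cases h : k = i
      · subst h
        rw [h3, if_pos rfl]
        omega
      · rw [h3, if_neg h]
        omega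

/-- Connectivity of the support of a Chevalley coroot. -/
lemma chev_conn : ∀ (L : ℕ), ∀ {a : AffLat n}, R.IsChevalleyRoot a →
    R.cs.length (R.refl a) ≤ L →
    ∀ S : Fin (n+1) → Prop, (∀ k j, S k → R.cartan j k ≠ 0 → S j) →
    (∃ x, S x ∧ R.coroot a x ≠ 0) → ∀ k, R.coroot a k ≠ 0 → S k := by
  intro L
  induction L with
  | zero =>
    intro a ha hL
    exact absurd hL (by have := R.length_refl_pos ha.1.1; omega)
  | succ L ih =>
    intro a ha hL S hS hwit
    obtain ⟨i, hi⟩ := R.cs.exists_rightDescent_of_ne_one (R.refl_ne_one ha.1.1)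
    have hi' : R.cs.length (R.refl a * R.cs.simple i) < R.cs.length (R.refl a) := hi
    by_cases hne : a = simpleVec i
    · subst hne
      rw [R.coroot_simple] at hwit ⊢
      obtain ⟨x, hSx, hax⟩ := hwit
      have hx : x = i := by
        by_contra h
        exact hax (simpleVec_ne i x h)
      intro k hk
      have hk' : k = i := by
        by_contra h
        exact hk (simpleVec_ne i k h)
      rw [hk', ← hx]
      exact hSx
    · obtain ⟨hpeq, ha', hcor', hrefl', hlen2, hht⟩ := R.chev_descent ha hi' hne
      have hcoord := R.chev_coroot_coord hcor'
      have ha'cor_nonneg := R.coroot_nonneg ha'.1.1 ha'.1.2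
      -- the pairing of α_i against the smaller coroot is -1
      have hpe : R.pairing (simpleVec i) (R.coroot (R.actR (R.cs.simple i) a)) = -1 := by
        rw [hcor', pairing_sub_right, pairing_smul_right, pairing_simple_simple, hpeq]
        ring
      have hedge : ∃ j, R.cartan j i ≠ 0 ∧ R.coroot (R.actR (R.cs.simple i) a) j ≠ 0 := by
        by_contra h
        push_neg at h
        have h0 : R.pairing (simpleVec i) (R.coroot (R.actR (R.cs.simple i) a)) = 0 := by
          rw [pairing_simpleVec_left]
          apply Finset.sum_eq_zero
          intro j _
          by_cases hA : R.cartan j i = 0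
          · rw [hA, zero_mul]
          · rw [h j hA, mul_zero]
        rw [h0] at hpe
        omega
      obtain ⟨j, hAji, ha'j⟩ := hedge
      obtain ⟨x, hSx, hax⟩ := hwit
      by_cases hx' : R.coroot (R.actR (R.cs.simple i) a) x = 0
      · -- then x = i
        have hxi : x = i := by
          by_contra h
          have := hcoord x
          rw [if_neg h] at this
          omega
        have hSi : S i := hxi ▸ hSx
        have hSj : S j := hS i j hSi hAji
        have hconn := ih ha' (by omega) S hS ⟨j, hSj, ha'j⟩
        intro k hk
        by_cases h : k = i
        · rw [h]; exact hSi
        · apply hconn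
          have := hcoord k
          rw [if_neg h] at this
          omega
      · have hconn := ih ha' (by omega) S hS ⟨x, hSx, hx'⟩
        have hSj : S j := hconn j ha'j
        have hSi : S i := hS j i hSj (R.cartan_ne_symm hAji)
        intro k hk
        by_cases h : k = i
        · rw [h]; exact hSi
        · apply hconn
          have := hcoord k
          rw [if_neg h] at this
          omega

end Chev

end AffineRootSystem

namespace AffineRootSystem

variable {n : ℕ} {W : Type*} [Group W] (R : AffineRootSystem n W)

section Lemmas6

lemma length_simple_mul_ge (w : W) (i : Fin (n+1)) :
    R.cs.length w ≤ R.cs.length (R.cs.simple i * w) + 1 := by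
  have h := R.cs.length_mul_le (R.cs.simple i) (R.cs.simple i * w)
  rw [R.cs.simple_mul_simple_cancel_left, R.cs.length_simple] at h
  omega

lemma length_mul_simple_ge (w : W) (i : Fin (n+1)) :
    R.cs.length w ≤ R.cs.length (w * R.cs.simple i) + 1 := by
  have h := R.cs.length_mul_le (w * R.cs.simple i) (R.cs.simple i)
  rw [R.cs.simple_mul_simple_cancel_right, R.cs.length_simple] at h
  omega

/-- A real positive root whose reflection has length 1 is a simple root. -/
lemma eq_simple_of_refl_length_one {a : AffLat n} (hr : R.IsReal a) (hpos : 0 ≤ a)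
    (h1 : R.cs.length (R.refl a) = 1) :
    ∃ m, a = simpleVec m ∧ R.refl a = R.cs.simple m := by
  obtain ⟨m, hm⟩ := R.cs.length_eq_one_iff.mp h1
  have hact : R.actR (R.cs.simple m) a = -a := by
    rw [← hm]
    exact R.actR_refl_self hr
  have hsupp : ∀ k, k ≠ m → a k = 0 := by
    intro k hk
    have h2 := congrFun hact k
    rw [R.actR_simple_apply_ne m a hk, Pi.neg_apply] at h2
    omega
  have : a = simpleVec m := R.eq_simpleVec_of_supp_subset hr hpos m hsupp
  exact ⟨m, this, by rw [this, R.refl_simple]⟩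

/-- If `⟨α_i, b∨⟩ = 0` then `s_b` commutes with `s_i`. -/
lemma simple_comm_of_pairing_zero {b : AffLat n} (hrb : R.IsReal b) {i : Fin (n+1)}
    (h : R.pairing (simpleVec i) (R.coroot b) = 0) :
    R.refl b * R.cs.simple i = R.cs.simple i * R.refl b := by
  have hact : R.actR (R.refl b) (simpleVec i) = simpleVec i := by
    rw [actR_refl R hrb, h, zero_smul, sub_zero]
  have h2 := R.refl_act (R.refl b) (simpleVec i)
  rw [hact, R.refl_simple, refl_inv R hrb] at h2
  -- h2 : s_i = refl b * s_i * refl b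
  have h3 := congrArg (fun x => x * R.refl b) h2
  simp only [mul_assoc] at h3
  rw [refl_mul_self R hrb, mul_one] at h3
  -- h3 : s_i * refl b = refl b * s_i
  exact h3.symm

/-- If `⟨b, a∨⟩ = 0` then `s_a` and `s_b` commute. -/
lemma refl_comm_of_pairing_zero {a b : AffLat n} (hra : R.IsReal a)
    (h : R.pairing b (R.coroot a) = 0) :
    R.refl a * R.refl b = R.refl b * R.refl a := by
  have hact : R.actR (R.refl a) b = b := by
    rw [actR_refl R hra, h, zero_smul, sub_zero]
  have h2 := R.refl_act (R.refl a) b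
  rw [hact, refl_inv R hra] at h2
  -- h2 : refl b = refl a * refl b * refl a
  have h3 := congrArg (fun x => x * R.refl a) h2
  simp only [mul_assoc] at h3
  rw [refl_mul_self R hra, mul_one] at h3
  exact h3.symm

/-- `⟨α_k, a∨⟩ ≥ 1` forces `k` to be a right descent of `s_a`. -/
lemma descent_of_pairing_pos {a : AffLat n} (hra : R.IsReal a) (hposa : 0 ≤ a)
    {k : Fin (n+1)} (hne : a ≠ simpleVec k)
    (h : 1 ≤ R.pairing (simpleVec k) (R.coroot a)) :
    R.cs.length (R.refl a * R.cs.simple k) < R.cs.length (R.refl a) := by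
  obtain ⟨k0, hk0ne, hk0⟩ : ∃ k0, k0 ≠ k ∧ a k0 ≠ 0 := by
    by_contra h'
    push_neg at h'
    exact hne (R.eq_simpleVec_of_supp_subset hra hposa k h')
  have hk0pos : 1 ≤ a k0 := lt_of_le_of_ne (hposa k0) (Ne.symm hk0)
  have hform := R.actR_refl hra (simpleVec k)
  have hneg : ¬ (0:AffLat n) ≤ R.actR (R.refl a) (simpleVec k) := by
    intro hge
    rw [Pi.le_def] at hge
    have h2 := hge k0
    rw [hform, simpleVec_sub_smul_apply, if_neg hk0ne] at h2
    simp only [Pi.zero_apply] at h2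
    have h3 : 0 < R.pairing (simpleVec k) (R.coroot a) * a k0 :=
      mul_pos (by omega) (by omega)
    omega
  rcases R.sign_trichotomy (R.isReal_simple k) (simpleVec_nonneg k) (R.refl a)
    with ⟨_, _, hlt⟩ | ⟨hge, _, _⟩
  · rwa [R.refl_simple] at hlt
  · exact absurd hge hneg

/-- At any right descent `i` of `s_a`: `b ≠ α_i` and `⟨α_i, b∨⟩ ≤ 0`, given
length-additivity of `s_a s_b`. -/
lemma descent_side {a b : AffLat n} (hra : R.IsReal a) (hrb : R.IsReal b) (hposb : 0 ≤ b)
    (hlen : R.cs.length (R.refl a * R.refl b)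
      = R.cs.length (R.refl a) + R.cs.length (R.refl b))
    {i : Fin (n+1)} (hi : R.cs.length (R.refl a * R.cs.simple i) < R.cs.length (R.refl a)) :
    b ≠ simpleVec i ∧ R.pairing (simpleVec i) (R.coroot b) ≤ 0 := by
  have hbne : b ≠ simpleVec i := by
    intro h
    rw [h, R.refl_simple] at hlen
    rw [R.cs.length_simple] at hlen
    omega
  refine ⟨hbne, ?_⟩
  by_contra hq
  push_neg at hq
  have hdesc := R.descent_of_pairing_pos hrb hposb hbne hq
  -- ℓ(v s_i) < ℓ v and ℓ(u s_i) < ℓ u gives contradiction with additivity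
  have h1 := R.length_mul_simple_of_lt hi
  have h2 := R.length_mul_simple_of_lt hdesc
  have h3 : R.cs.length (R.cs.simple i * R.refl b)
      = R.cs.length (R.refl b * R.cs.simple i) := R.length_refl_simple_comm hrb i
  have h4 : R.refl a * R.refl b
      = (R.refl a * R.cs.simple i) * (R.cs.simple i * R.refl b) := by
    rw [← mul_assoc, R.cs.simple_mul_simple_cancel_right]
  have h5 := R.cs.length_mul_le (R.refl a * R.cs.simple i) (R.cs.simple i * R.refl b)
  rw [← h4] at h5
  omega

/-- Mirror of `descent_side`: at any right descent `j` of `s_b`: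
`a ≠ α_j` and `⟨α_j, a∨⟩ ≤ 0`. -/
lemma descent_side' {a b : AffLat n} (hra : R.IsReal a) (hposa : 0 ≤ a) (hrb : R.IsReal b)
    (hlen : R.cs.length (R.refl a * R.refl b)
      = R.cs.length (R.refl a) + R.cs.length (R.refl b))
    {j : Fin (n+1)} (hj : R.cs.length (R.refl b * R.cs.simple j) < R.cs.length (R.refl b)) :
    a ≠ simpleVec j ∧ R.pairing (simpleVec j) (R.coroot a) ≤ 0 := by
  have hane : a ≠ simpleVec j := by
    intro h
    rw [h, R.refl_simple] at hlen
    have h3 : R.cs.length (R.cs.simple j * R.refl b)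
        = R.cs.length (R.refl b * R.cs.simple j) := R.length_refl_simple_comm hrb j
    rw [R.cs.length_simple] at hlen
    omega
  refine ⟨hane, ?_⟩
  by_contra hp
  push_neg at hp
  have hdesc := R.descent_of_pairing_pos hra hposa hane hp
  have h1 := R.length_mul_simple_of_lt hj
  have h2 := R.length_mul_simple_of_lt hdesc
  have h3 : R.cs.length (R.cs.simple j * R.refl b)
      = R.cs.length (R.refl b * R.cs.simple j) := R.length_refl_simple_comm hrb j
  have h4 : R.refl a * R.refl b
      = (R.refl a * R.cs.simple j) * (R.cs.simple j * R.refl b) := by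
    rw [← mul_assoc, R.cs.simple_mul_simple_cancel_right]
  have h5 := R.cs.length_mul_le (R.refl a * R.cs.simple j) (R.cs.simple j * R.refl b)
  rw [← h4] at h5
  omega

end Lemmas6

end AffineRootSystem

namespace AffineRootSystem

variable {n : ℕ} {W : Type*} [Group W] (R : AffineRootSystem n W)

section BaseCases

lemma sq_sub_le (u : ℕ) : (u-2)*(u-2) ≤ u*u :=
  Nat.mul_le_mul (Nat.sub_le u 2) (Nat.sub_le u 2)

lemma sq_sub_lt (u : ℕ) (hu : 2 ≤ u) : (u-2)*(u-2) + 1 ≤ u*u := by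
  obtain ⟨m, rfl⟩ := Nat.exists_eq_add_of_le hu
  have h1 : 2 + m - 2 = m := by omega
  rw [h1]
  nlinarith

/-- Main theorem, case `a` simple. -/
lemma main_case_simple {a b : AffLat n} (ha : R.IsChevalleyRoot a) (hb : R.IsChevalleyRoot b)
    (hne : R.refl a * R.refl b ≠ R.refl b * R.refl a)
    (hlen : R.cs.length (R.refl a * R.refl b)
      = R.cs.length (R.refl a) + R.cs.length (R.refl b))
    {m : Fin (n+1)} (ham : a = simpleVec m) :
    R.coroot a + R.coroot b ≤ R.imag := by
  have hum : R.refl a = R.cs.simple m := by rw [ham, R.refl_simple]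
  have hi : R.cs.length (R.refl a * R.cs.simple m) < R.cs.length (R.refl a) := by
    rw [hum, R.cs.simple_mul_simple_self, R.cs.length_one, R.cs.length_simple]
    omega
  obtain ⟨hbne, hqle⟩ := R.descent_side ha.1.1 hb.1.1 hb.1.2 hlen hi
  have hqne : R.pairing (simpleVec m) (R.coroot b) ≠ 0 := by
    intro h0
    have hcomm := R.simple_comm_of_pairing_zero hb.1.1 h0
    rw [← hum] at hcomm
    exact hne hcomm.symm
  have hble := R.chev_coroot_le_imag (R.cs.length (R.refl b)) hb le_rfl
  have hble' := hble
  rw [Pi.le_def] at hble'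
  have hz0 : (0:AffLat n) ≤ R.imag - R.coroot b := sub_nonneg.mpr hble
  have hpz : 1 ≤ R.pairing (simpleVec m) (R.imag - R.coroot b) := by
    rw [pairing_sub_right, pairing_simpleVec_imag]
    omega
  have hzm := R.coord_pos_of_pairing_pos hz0 hpz
  rw [Pi.sub_apply] at hzm
  rw [ham, R.coroot_simple, Pi.le_def]
  intro k
  rw [Pi.add_apply, simpleVec_apply]
  have h2 := hble' k
  by_cases h : k = m
  · subst h
    rw [if_pos rfl]
    omega
  · rw [if_neg h]
    omega

/-- Main theorem, case `b` simple. -/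
lemma main_case_simple' {a b : AffLat n} (ha : R.IsChevalleyRoot a) (hb : R.IsChevalleyRoot b)
    (hne : R.refl a * R.refl b ≠ R.refl b * R.refl a)
    (hlen : R.cs.length (R.refl a * R.refl b)
      = R.cs.length (R.refl a) + R.cs.length (R.refl b))
    {m : Fin (n+1)} (hbm : b = simpleVec m) :
    R.coroot a + R.coroot b ≤ R.imag := by
  have hvm : R.refl b = R.cs.simple m := by rw [hbm, R.refl_simple]
  have hj : R.cs.length (R.refl b * R.cs.simple m) < R.cs.length (R.refl b) := by
    rw [hvm, R.cs.simple_mul_simple_self, R.cs.length_one, R.cs.length_simple]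
    omega
  obtain ⟨hane, hple⟩ := R.descent_side' ha.1.1 ha.1.2 hb.1.1 hlen hj
  have hpne : R.pairing (simpleVec m) (R.coroot a) ≠ 0 := by
    intro h0
    have hcomm := R.simple_comm_of_pairing_zero ha.1.1 h0
    rw [← hvm] at hcomm
    exact hne hcomm
  have hale := R.chev_coroot_le_imag (R.cs.length (R.refl a)) ha le_rfl
  have hale' := hale
  rw [Pi.le_def] at hale'
  have hz0 : (0:AffLat n) ≤ R.imag - R.coroot a := sub_nonneg.mpr hale
  have hpz : 1 ≤ R.pairing (simpleVec m) (R.imag - R.coroot a) := by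
    rw [pairing_sub_right, pairing_simpleVec_imag]
    omega
  have hzm := R.coord_pos_of_pairing_pos hz0 hpz
  rw [Pi.sub_apply] at hzm
  rw [hbm, R.coroot_simple, Pi.le_def]
  intro k
  rw [Pi.add_apply, simpleVec_apply]
  have h2 := hale' k
  by_cases h : k = m
  · subst h
    rw [if_pos rfl]
    omega
  · rw [if_neg h]
    omega

end BaseCases

end AffineRootSystem

namespace AffineRootSystem

variable {n : ℕ} {W : Type*} [Group W] (R : AffineRootSystem n W)

section MoveQ0

/-- The reduction move when a right descent `i` of `s_a` pairs to zero with `b∨`. -/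
lemma move_q0 {a b : AffLat n} (ha : R.IsChevalleyRoot a) (hb : R.IsChevalleyRoot b)
    (hne : R.refl a * R.refl b ≠ R.refl b * R.refl a)
    (hlen : R.cs.length (R.refl a * R.refl b)
      = R.cs.length (R.refl a) + R.cs.length (R.refl b))
    {i : Fin (n+1)}
    (hi : R.cs.length (R.refl a * R.cs.simple i) < R.cs.length (R.refl a))
    (hane : a ≠ simpleVec i)
    (hq0 : R.pairing (simpleVec i) (R.coroot b) = 0) :
    R.IsChevalleyRoot (R.actR (R.cs.simple i) a)
    ∧ (R.refl (R.actR (R.cs.simple i) a) * R.refl b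
        ≠ R.refl b * R.refl (R.actR (R.cs.simple i) a))
    ∧ R.cs.length (R.refl (R.actR (R.cs.simple i) a) * R.refl b)
        = R.cs.length (R.refl (R.actR (R.cs.simple i) a)) + R.cs.length (R.refl b)
    ∧ R.cs.length (R.refl (R.actR (R.cs.simple i) a)) + 2 = R.cs.length (R.refl a)
    ∧ R.coroot (R.actR (R.cs.simple i) a) = R.coroot a - (1:ℤ) • simpleVec i
    ∧ R.pairing (simpleVec i) (R.coroot a) = 1 := by
  obtain ⟨hpeq, ha', hcor', hrefl', hlen2, hht⟩ := R.chev_descent ha hi hane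
  have hcommv : R.refl b * R.cs.simple i = R.cs.simple i * R.refl b :=
    R.simple_comm_of_pairing_zero hb.1.1 hq0
  -- (s_i u s_i) * v = s_i (u v) s_i
  have hL : (R.cs.simple i * R.refl a * R.cs.simple i) * R.refl b
      = R.cs.simple i * (R.refl a * R.refl b) * R.cs.simple i := by
    rw [mul_assoc (R.cs.simple i * R.refl a) (R.cs.simple i) (R.refl b), ← hcommv,
      ← mul_assoc, mul_assoc (R.cs.simple i) (R.refl a) (R.refl b)]
  have hR : R.refl b * (R.cs.simple i * R.refl a * R.cs.simple i)
      = R.cs.simple i * (R.refl b * R.refl a) * R.cs.simple i := by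
    rw [← mul_assoc, ← mul_assoc, hcommv, mul_assoc (R.cs.simple i) (R.refl b) (R.refl a)]
  have hne'' : R.refl (R.actR (R.cs.simple i) a) * R.refl b
      ≠ R.refl b * R.refl (R.actR (R.cs.simple i) a) := by
    rw [hrefl']
    intro heq
    apply hne
    have e3 : R.cs.simple i * (R.refl a * R.refl b) * R.cs.simple i
        = R.cs.simple i * (R.refl b * R.refl a) * R.cs.simple i := by
      rw [← hL, ← hR, heq]
    exact mul_left_cancel (mul_right_cancel e3)
  -- length bookkeeping
  have hsu : R.cs.length (R.cs.simple i * R.refl a) + 1 = R.cs.length (R.refl a) := by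
    rw [R.length_refl_simple_comm ha.1.1 i]
    exact R.length_mul_simple_of_lt hi
  have hA1 := R.cs.length_mul_le (R.cs.simple i * R.refl a) (R.refl b)
  rw [mul_assoc] at hA1
  have hA2 := R.length_simple_mul_ge (R.refl a * R.refl b) i
  have hA : R.cs.length (R.cs.simple i * (R.refl a * R.refl b)) + 1
      = R.cs.length (R.refl a) + R.cs.length (R.refl b) := by
    omega
  -- descent of s_i(uv) at i on the right
  have hvei : R.actR (R.refl b) (simpleVec i) = simpleVec i := by
    rw [R.actR_refl hb.1.1, hq0, zero_smul, sub_zero]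
  have huei : R.actR (R.refl a) (simpleVec i)
      = simpleVec i - (1:ℤ) • a := by
    rw [R.actR_refl ha.1.1, hpeq]
  have hXeq : R.actR (R.cs.simple i * (R.refl a * R.refl b)) (simpleVec i)
      = - simpleVec i - (1:ℤ) • (R.actR (R.cs.simple i) a) := by
    rw [R.actR_mul, R.actR_mul, hvei, huei, actR_sub, actR_smul, actR_simple_simpleVec]
  have hXneg : R.actR (R.cs.simple i * (R.refl a * R.refl b)) (simpleVec i) ≤ 0 := by
    rw [hXeq, Pi.le_def]
    intro k
    have h6 : (0:ℤ) ≤ R.actR (R.cs.simple i) a k := ha'.1.2 k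
    simp only [Pi.sub_apply, Pi.neg_apply, Pi.smul_apply, smul_eq_mul, one_mul,
      Pi.zero_apply]
    rw [simpleVec_apply]
    split <;> omega
  have hB : R.cs.length ((R.cs.simple i * (R.refl a * R.refl b)) * R.refl (simpleVec i))
      < R.cs.length (R.cs.simple i * (R.refl a * R.refl b)) :=
    (R.length_refl_lt_iff _ (R.isReal_simple i) (simpleVec_nonneg i) _).mpr hXneg
  rw [R.refl_simple] at hB
  have hBexact := R.length_mul_simple_of_lt hB
  have hprod : R.refl (R.actR (R.cs.simple i) a) * R.refl b
      = (R.cs.simple i * (R.refl a * R.refl b)) * R.cs.simple i := by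
    rw [hrefl']
    exact hL
  have hlen'' : R.cs.length (R.refl (R.actR (R.cs.simple i) a) * R.refl b)
      = R.cs.length (R.refl (R.actR (R.cs.simple i) a)) + R.cs.length (R.refl b) := by
    rw [hprod]
    omega
  exact ⟨ha', hne'', hlen'', hlen2, hcor', hpeq⟩

end MoveQ0

end AffineRootSystem

namespace AffineRootSystem

variable {n : ℕ} {W : Type*} [Group W] (R : AffineRootSystem n W)

section MoveQ0'

lemma length_simple_mul_of_lt {w : W} {i : Fin (n+1)}
    (h : R.cs.length (R.cs.simple i * w) < R.cs.length w) :
    R.cs.length (R.cs.simple i * w) + 1 = R.cs.length w := by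
  rcases R.cs.length_simple_mul w i with h' | h'
  · omega
  · exact h'

/-- The reduction move when a right descent `j` of `s_b` pairs to zero with `a∨`. -/
lemma move_q0' {a b : AffLat n} (ha : R.IsChevalleyRoot a) (hb : R.IsChevalleyRoot b)
    (hne : R.refl a * R.refl b ≠ R.refl b * R.refl a)
    (hlen : R.cs.length (R.refl a * R.refl b)
      = R.cs.length (R.refl a) + R.cs.length (R.refl b))
    {j : Fin (n+1)}
    (hj : R.cs.length (R.refl b * R.cs.simple j) < R.cs.length (R.refl b))
    (hbne : b ≠ simpleVec j)
    (hp0 : R.pairing (simpleVec j) (R.coroot a) = 0) :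
    R.IsChevalleyRoot (R.actR (R.cs.simple j) b)
    ∧ (R.refl a * R.refl (R.actR (R.cs.simple j) b)
        ≠ R.refl (R.actR (R.cs.simple j) b) * R.refl a)
    ∧ R.cs.length (R.refl a * R.refl (R.actR (R.cs.simple j) b))
        = R.cs.length (R.refl a) + R.cs.length (R.refl (R.actR (R.cs.simple j) b))
    ∧ R.cs.length (R.refl (R.actR (R.cs.simple j) b)) + 2 = R.cs.length (R.refl b)
    ∧ R.coroot (R.actR (R.cs.simple j) b) = R.coroot b - (1:ℤ) • simpleVec j
    ∧ R.pairing (simpleVec j) (R.coroot b) = 1 := by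
  obtain ⟨hpeq, hb', hcorb', hreflb', hlenb2, hht⟩ := R.chev_descent hb hj hbne
  have hcommu : R.refl a * R.cs.simple j = R.cs.simple j * R.refl a :=
    R.simple_comm_of_pairing_zero ha.1.1 hp0
  have hL' : R.refl a * (R.cs.simple j * R.refl b * R.cs.simple j)
      = R.cs.simple j * (R.refl a * R.refl b) * R.cs.simple j := by
    rw [← mul_assoc, ← mul_assoc, hcommu, mul_assoc (R.cs.simple j) (R.refl a) (R.refl b)]
  have hR' : (R.cs.simple j * R.refl b * R.cs.simple j) * R.refl a
      = R.cs.simple j * (R.refl b * R.refl a) * R.cs.simple j := by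
    rw [mul_assoc (R.cs.simple j * R.refl b) (R.cs.simple j) (R.refl a), ← hcommu,
      ← mul_assoc, mul_assoc (R.cs.simple j) (R.refl b) (R.refl a)]
  have hne'' : R.refl a * R.refl (R.actR (R.cs.simple j) b)
      ≠ R.refl (R.actR (R.cs.simple j) b) * R.refl a := by
    rw [hreflb']
    intro heq
    apply hne
    have e3 : R.cs.simple j * (R.refl a * R.refl b) * R.cs.simple j
        = R.cs.simple j * (R.refl b * R.refl a) * R.cs.simple j := by
      rw [← hL', ← hR', heq]
    exact mul_left_cancel (mul_right_cancel e3)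
  -- length bookkeeping
  have hsv := R.length_mul_simple_of_lt hj
  have hA1 := R.cs.length_mul_le (R.refl a) (R.refl b * R.cs.simple j)
  rw [← mul_assoc] at hA1
  have hA2 := R.length_mul_simple_ge (R.refl a * R.refl b) j
  have hA : R.cs.length ((R.refl a * R.refl b) * R.cs.simple j) + 1
      = R.cs.length (R.refl a) + R.cs.length (R.refl b) := by
    omega
  -- left descent of (uv)s_j at j
  have huej : R.actR (R.refl a) (simpleVec j) = simpleVec j := by
    rw [R.actR_refl ha.1.1, hp0, zero_smul, sub_zero]
  have hvej : R.actR (R.refl b) (simpleVec j) = simpleVec j - (1:ℤ) • b := by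
    rw [R.actR_refl hb.1.1, hpeq]
  have hinv : ((R.refl a * R.refl b) * R.cs.simple j)⁻¹
      = R.cs.simple j * (R.refl b * R.refl a) := by
    rw [mul_inv_rev, mul_inv_rev, R.cs.inv_simple, refl_inv R ha.1.1, refl_inv R hb.1.1]
  have hXeq : R.actR (R.cs.simple j * (R.refl b * R.refl a)) (simpleVec j)
      = - simpleVec j - (1:ℤ) • (R.actR (R.cs.simple j) b) := by
    rw [R.actR_mul, R.actR_mul, huej, hvej, actR_sub, actR_smul, actR_simple_simpleVec]
  have hXneg : R.actR (R.cs.simple j * (R.refl b * R.refl a)) (simpleVec j) ≤ 0 := by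
    rw [hXeq, Pi.le_def]
    intro k
    have h6 : (0:ℤ) ≤ R.actR (R.cs.simple j) b k := hb'.1.2 k
    simp only [Pi.sub_apply, Pi.neg_apply, Pi.smul_apply, smul_eq_mul, one_mul,
      Pi.zero_apply]
    rw [simpleVec_apply]
    split <;> omega
  have hB : R.cs.length ((((R.refl a * R.refl b) * R.cs.simple j)⁻¹) * R.refl (simpleVec j))
      < R.cs.length (((R.refl a * R.refl b) * R.cs.simple j)⁻¹) := by
    refine (R.length_refl_lt_iff _ (R.isReal_simple j) (simpleVec_nonneg j) _).mpr ?_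
    rw [hinv]
    exact hXneg
  rw [R.refl_simple] at hB
  -- translate to a left descent
  have hB' : R.cs.length (R.cs.simple j * ((R.refl a * R.refl b) * R.cs.simple j))
      < R.cs.length ((R.refl a * R.refl b) * R.cs.simple j) := by
    have e7 : (((R.refl a * R.refl b) * R.cs.simple j)⁻¹ * R.cs.simple j)⁻¹
        = R.cs.simple j * ((R.refl a * R.refl b) * R.cs.simple j) := by
      rw [mul_inv_rev, inv_inv, R.cs.inv_simple]
    have e8 := R.cs.length_inv (((R.refl a * R.refl b) * R.cs.simple j)⁻¹ * R.cs.simple j)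
    rw [e7] at e8
    have e9 := R.cs.length_inv ((R.refl a * R.refl b) * R.cs.simple j)
    omega
  have hBexact := R.length_simple_mul_of_lt hB'
  have hprod : R.refl a * R.refl (R.actR (R.cs.simple j) b)
      = R.cs.simple j * ((R.refl a * R.refl b) * R.cs.simple j) := by
    rw [hreflb', hL', mul_assoc]
  have hlen'' : R.cs.length (R.refl a * R.refl (R.actR (R.cs.simple j) b))
      = R.cs.length (R.refl a) + R.cs.length (R.refl (R.actR (R.cs.simple j) b)) := by
    rw [hprod]
    omega
  exact ⟨hb', hne'', hlen'', hlenb2, hcorb', hpeq⟩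

end MoveQ0'

end AffineRootSystem

namespace AffineRootSystem

variable {n : ℕ} {W : Type*} [Group W] (R : AffineRootSystem n W)

section PF

lemma htv_neg (x : AffLat n) : htv (-x) = - htv x := by
  simp [htv, Finset.sum_neg_distrib]

lemma null_column (k : Fin (n+1)) : ∑ m, R.cartan m k * R.imag m = 0 := by
  rw [← pairing_simpleVec_left, pairing_simpleVec_imag]

/-- Perron–Frobenius-type argument: a nonnegative vector `d` with `Aᵀd ≤ 0`
whose support is "connected" is either `≤ imag` or proportional to `imag` on its
support; we only record the consequence `⟨α_k, d⟩ = 0` on the support. -/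
lemma pf_part {d : AffLat n} (hd : 0 ≤ d)
    (hK : ∀ k, R.pairing (simpleVec k) d ≤ 0)
    (hconn : ∀ S : Fin (n+1) → Prop, (∀ k j, S k → R.cartan j k ≠ 0 → S j) →
      ∀ x, S x → d x ≠ 0 → ∀ k, d k ≠ 0 → S k) :
    d ≤ R.imag ∨ (∀ k, d k ≠ 0 → R.pairing (simpleVec k) d = 0) := by
  -- choose a maximizer of d k / imag k
  have hex : ∃ k₀ : Fin (n+1), ∀ k, d k * R.imag k₀ ≤ d k₀ * R.imag k := by
    obtain ⟨k₀, -, hmax⟩ := Finset.exists_max_image Finset.univ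
      (fun k => (d k : ℚ) / (R.imag k : ℚ)) ⟨0, Finset.mem_univ 0⟩
    refine ⟨k₀, fun k => ?_⟩
    have h1 := hmax k (Finset.mem_univ k)
    have hik : (0:ℚ) < (R.imag k : ℚ) := by
      have := R.imag_pos k
      exact_mod_cast (by omega : (0:ℤ) < R.imag k)
    have hik₀ : (0:ℚ) < (R.imag k₀ : ℚ) := by
      have := R.imag_pos k₀
      exact_mod_cast (by omega : (0:ℤ) < R.imag k₀)
    rw [div_le_div_iff₀ hik hik₀] at h1
    exact_mod_cast h1
  obtain ⟨k₀, hmax⟩ := hex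
  by_cases hfin : d k₀ ≤ R.imag k₀
  · left
    rw [Pi.le_def]
    intro k
    have h1 := hmax k
    have h2 : d k₀ * R.imag k ≤ R.imag k₀ * R.imag k := by
      have := R.imag_pos k
      exact mul_le_mul_of_nonneg_right hfin (by omega)
    have h3 : d k * R.imag k₀ ≤ R.imag k * R.imag k₀ := by
      rw [mul_comm (R.imag k) (R.imag k₀)]
      linarith
    have hp : (0:ℤ) < R.imag k₀ := by have := R.imag_pos k₀; omega
    exact le_of_mul_le_mul_right h3 hp
  · right
    push_neg at hfin
    have hd0k₀ : d k₀ ≠ 0 := by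
      have := R.imag_pos k₀
      omega
    -- the maximizing set is adjacency-closed
    set S : Fin (n+1) → Prop := fun k => d k * R.imag k₀ = d k₀ * R.imag k with hSdef
    have hSk₀ : S k₀ := rfl
    have hSclosed : ∀ k j, S k → R.cartan j k ≠ 0 → S j := by
      intro k j hSk hAjk
      by_cases hjk : j = k
      · rwa [hjk]
      -- notation
      have hKk := hK k
      rw [pairing_simpleVec_left] at hKk
      have hsplitd := Finset.add_sum_erase Finset.univ (fun m => R.cartan m k * d m)
        (Finset.mem_univ k)
      have hspliti := Finset.add_sum_erase Finset.univ (fun m => R.cartan m k * R.imag m)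
        (Finset.mem_univ k)
      rw [R.cartan_diag] at hsplitd hspliti
      rw [R.null_column k] at hspliti
      -- termwise inequality
      have hterm : ∀ m ∈ Finset.univ.erase k,
          (0 - R.cartan m k) * (d m * R.imag k₀)
          ≤ (0 - R.cartan m k) * (d k₀ * R.imag m) := by
        intro m hm
        have hmk : m ≠ k := (Finset.mem_erase.mp hm).1
        have hA := R.cartan_offdiag m k hmk
        exact mul_le_mul_of_nonneg_left (hmax m) (by omega)
      have hsum_le := Finset.sum_le_sum hterm
      have e1 : ∑ m ∈ Finset.univ.erase k, (0 - R.cartan m k) * (d m * R.imag k₀)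
          = (0 - ∑ m ∈ Finset.univ.erase k, R.cartan m k * d m) * R.imag k₀ := by
        calc ∑ m ∈ Finset.univ.erase k, (0 - R.cartan m k) * (d m * R.imag k₀)
            = ∑ m ∈ Finset.univ.erase k, (-(R.cartan m k * d m)) * R.imag k₀ :=
              Finset.sum_congr rfl (fun m _ => by ring)
          _ = (∑ m ∈ Finset.univ.erase k, -(R.cartan m k * d m)) * R.imag k₀ :=
              (Finset.sum_mul _ _ _).symm
          _ = (0 - ∑ m ∈ Finset.univ.erase k, R.cartan m k * d m) * R.imag k₀ := by
              rw [Finset.sum_neg_distrib]; ring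
      have e2 : ∑ m ∈ Finset.univ.erase k, (0 - R.cartan m k) * (d k₀ * R.imag m)
          = d k₀ * (0 - ∑ m ∈ Finset.univ.erase k, R.cartan m k * R.imag m) := by
        calc ∑ m ∈ Finset.univ.erase k, (0 - R.cartan m k) * (d k₀ * R.imag m)
            = ∑ m ∈ Finset.univ.erase k, d k₀ * (-(R.cartan m k * R.imag m)) :=
              Finset.sum_congr rfl (fun m _ => by ring)
          _ = d k₀ * ∑ m ∈ Finset.univ.erase k, -(R.cartan m k * R.imag m) :=
              (Finset.mul_sum _ _ _).symm
          _ = d k₀ * (0 - ∑ m ∈ Finset.univ.erase k, R.cartan m k * R.imag m) := by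
              rw [Finset.sum_neg_distrib]; ring
      -- global equality of the two sums
      have hik₀ : (0:ℤ) ≤ R.imag k₀ := by have := R.imag_pos k₀; omega
      have hchain : (0 - ∑ m ∈ Finset.univ.erase k, R.cartan m k * d m) * R.imag k₀
          ≥ (2 * d k) * R.imag k₀ := by
        have h5 : 2 * d k ≤ 0 - ∑ m ∈ Finset.univ.erase k, R.cartan m k * d m := by
          omega
        exact mul_le_mul_of_nonneg_right h5 hik₀
      have heq2 : d k₀ * (0 - ∑ m ∈ Finset.univ.erase k, R.cartan m k * R.imag m)
          = 2 * (d k * R.imag k₀) := by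
        have h6 : (0 - ∑ m ∈ Finset.univ.erase k, R.cartan m k * R.imag m)
            = 2 * R.imag k := by omega
        rw [h6, hSk]
        ring
      -- so the termwise ≤ is an equality at j
      by_contra hSj
      have hjlt : (0 - R.cartan j k) * (d j * R.imag k₀)
          < (0 - R.cartan j k) * (d k₀ * R.imag j) := by
        have hA := R.cartan_offdiag j k hjk
        have h7 : 0 < 0 - R.cartan j k := by omega
        have h8 : d j * R.imag k₀ < d k₀ * R.imag j :=
          lt_of_le_of_ne (hmax j) hSj
        exact mul_lt_mul_of_pos_left h8 h7
      have hstrict := Finset.sum_lt_sum hterm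
        ⟨j, Finset.mem_erase.mpr ⟨hjk, Finset.mem_univ j⟩, hjlt⟩
      rw [e1, e2] at hstrict
      nlinarith [hchain, heq2, hstrict]
    -- now conclude the pairing vanishes on the support
    have hSd := hconn S hSclosed k₀ hSk₀ hd0k₀
    intro k hdk
    have hge : 0 ≤ R.pairing (simpleVec k) d := by
      have hEgoal : R.pairing (simpleVec k) d * R.imag k₀
          = ∑ m, (R.cartan m k * d m) * R.imag k₀ := by
        rw [pairing_simpleVec_left, Finset.sum_mul]
      have hterm2 : ∀ m, (R.cartan m k * d m) * R.imag k₀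
          = R.cartan m k * d k₀ * R.imag m
            - (if d m = 0 then R.cartan m k * d k₀ * R.imag m else 0) := by
        intro m
        by_cases hm : d m = 0
        · rw [if_pos hm, hm]; ring
        · rw [if_neg hm, sub_zero]
          have hSm : d m * R.imag k₀ = d k₀ * R.imag m := hSd m hm
          calc (R.cartan m k * d m) * R.imag k₀ = R.cartan m k * (d m * R.imag k₀) := by ring
            _ = R.cartan m k * (d k₀ * R.imag m) := by rw [hSm]
            _ = R.cartan m k * d k₀ * R.imag m := by ring
      have hsum2 : ∑ m, (R.cartan m k * d m) * R.imag k₀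
          = ∑ m, (R.cartan m k * d k₀ * R.imag m
            - (if d m = 0 then R.cartan m k * d k₀ * R.imag m else 0)) :=
        Finset.sum_congr rfl (fun m _ => hterm2 m)
      have e3 : ∑ m, R.cartan m k * d k₀ * R.imag m
          = d k₀ * ∑ m, R.cartan m k * R.imag m := by
        rw [Finset.mul_sum]
        apply Finset.sum_congr rfl
        intro m _
        ring
      have e4 : ∑ m, (if d m = 0 then R.cartan m k * d k₀ * R.imag m else 0) ≤ 0 := by
        apply Finset.sum_nonpos
        intro m _
        by_cases hm : d m = 0
        · rw [if_pos hm]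
          have hmk : m ≠ k := by
            intro h
            rw [h] at hm
            exact hdk hm
          have hA := R.cartan_offdiag m k hmk
          have h9 : 0 ≤ d k₀ := hd k₀
          have h10 : (0:ℤ) ≤ R.imag m := by have := R.imag_pos m; omega
          have h11 : R.cartan m k * d k₀ ≤ 0 :=
            mul_nonpos_iff.mpr (Or.inr ⟨hA, h9⟩)
          exact mul_nonpos_iff.mpr (Or.inr ⟨h11, h10⟩)
        · rw [if_neg hm]
      have e5 : ∑ m, (R.cartan m k * d k₀ * R.imag m
            - (if d m = 0 then R.cartan m k * d k₀ * R.imag m else 0))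
          = (∑ m, R.cartan m k * d k₀ * R.imag m)
            - ∑ m, (if d m = 0 then R.cartan m k * d k₀ * R.imag m else 0) := by
        rw [Finset.sum_sub_distrib]
      have e6 : R.pairing (simpleVec k) d * R.imag k₀ ≥ 0 := by
        rw [hEgoal, hsum2, e5, e3, R.null_column k, mul_zero]
        omega
      by_contra hlt
      push_neg at hlt
      have h12 : R.pairing (simpleVec k) d * R.imag k₀ < 0 :=
        mul_neg_of_neg_of_pos hlt (by have := R.imag_pos k₀; omega)
      omega
    have := hK k
    omega

end PF

end AffineRootSystem

namespace AffineRootSystem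

variable {n : ℕ} {W : Type*} [Group W] (R : AffineRootSystem n W)

section Stuck

/-- Conjugation identity in the group. -/
lemma conj_mul_conj (i : Fin (n+1)) (x y : W) :
    (R.cs.simple i * x * R.cs.simple i) * (R.cs.simple i * y * R.cs.simple i)
      = R.cs.simple i * (x * y) * R.cs.simple i := by
  rw [mul_assoc (R.cs.simple i * x) (R.cs.simple i) (R.cs.simple i * y * R.cs.simple i),
    ← mul_assoc (R.cs.simple i) (R.cs.simple i * y) (R.cs.simple i),
    ← mul_assoc (R.cs.simple i) (R.cs.simple i) y,
    R.cs.simple_mul_simple_self, one_mul, ← mul_assoc, ← mul_assoc,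
    mul_assoc (R.cs.simple i) x y]

/-- The stuck case: either we are already done, or we can conjugate both roots
by a simple reflection, preserving everything and reducing `ℓ(s_a)`. -/
lemma stuck_case {a b : AffLat n} (ha : R.IsChevalleyRoot a) (hb : R.IsChevalleyRoot b)
    (hne : R.refl a * R.refl b ≠ R.refl b * R.refl a)
    (hlen : R.cs.length (R.refl a * R.refl b)
      = R.cs.length (R.refl a) + R.cs.length (R.refl b))
    (hla3 : 3 ≤ R.cs.length (R.refl a)) (hlb3 : 3 ≤ R.cs.length (R.refl b))
    (hQ : ∀ i, R.cs.length (R.refl a * R.cs.simple i) < R.cs.length (R.refl a) →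
      R.pairing (simpleVec i) (R.coroot b) ≠ 0)
    (hP : ∀ j, R.cs.length (R.refl b * R.cs.simple j) < R.cs.length (R.refl b) →
      R.pairing (simpleVec j) (R.coroot a) ≠ 0) :
    (R.coroot a + R.coroot b ≤ R.imag) ∨
    (∃ a' b', R.IsChevalleyRoot a' ∧ R.IsChevalleyRoot b'
      ∧ (R.refl a' * R.refl b' ≠ R.refl b' * R.refl a')
      ∧ R.cs.length (R.refl a' * R.refl b')
          = R.cs.length (R.refl a') + R.cs.length (R.refl b')
      ∧ R.coroot a' + R.coroot b' = R.coroot a + R.coroot b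
      ∧ R.cs.length (R.refl a') + 2 = R.cs.length (R.refl a)
      ∧ R.cs.length (R.refl a') + R.cs.length (R.refl b')
          = R.cs.length (R.refl a) + R.cs.length (R.refl b)) := by
  have hane : ∀ k, a ≠ simpleVec k := by
    intro k h
    have h2 := hla3
    rw [h, R.refl_simple, R.cs.length_simple] at h2
    omega
  have hbne : ∀ k, b ≠ simpleVec k := by
    intro k h
    have h2 := hlb3
    rw [h, R.refl_simple, R.cs.length_simple] at h2
    omega
  have hda := R.coroot_nonneg ha.1.1 ha.1.2
  have hdb := R.coroot_nonneg hb.1.1 hb.1.2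
  have hd : (0:AffLat n) ≤ R.coroot a + R.coroot b := by
    rw [Pi.le_def]
    intro k
    have h1 : (0:ℤ) ≤ R.coroot a k := hda k
    have h2 : (0:ℤ) ≤ R.coroot b k := hdb k
    rw [Pi.add_apply, Pi.zero_apply]
    omega
  -- (1) ⟨α_k, d⟩ ≤ 0 for all k
  have hK : ∀ k, R.pairing (simpleVec k) (R.coroot a + R.coroot b) ≤ 0 := by
    intro k
    rw [pairing_add_right]
    by_cases hdu : R.cs.length (R.refl a * R.cs.simple k) < R.cs.length (R.refl a)
    · obtain ⟨hpeqk, -, -, -, -, -⟩ := R.chev_descent ha hdu (hane k)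
      have hq := (R.descent_side ha.1.1 hb.1.1 hb.1.2 hlen hdu).2
      have hq' := hQ k hdu
      omega
    · by_cases hdv : R.cs.length (R.refl b * R.cs.simple k) < R.cs.length (R.refl b)
      · obtain ⟨hpeqk, -, -, -, -, -⟩ := R.chev_descent hb hdv (hbne k)
        have hp := (R.descent_side' ha.1.1 ha.1.2 hb.1.1 hlen hdv).2
        have hp' := hP k hdv
        omega
      · have h1 : R.pairing (simpleVec k) (R.coroot a) ≤ 0 := by
          by_contra h
          push_neg at h
          exact hdu (R.descent_of_pairing_pos ha.1.1 ha.1.2 (hane k) h)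
        have h2 : R.pairing (simpleVec k) (R.coroot b) ≤ 0 := by
          by_contra h
          push_neg at h
          exact hdv (R.descent_of_pairing_pos hb.1.1 hb.1.2 (hbne k) h)
        omega
  -- (2) connectivity of the support of d
  have hpab : R.pairing b (R.coroot a) ≠ 0 :=
    fun h0 => hne (R.refl_comm_of_pairing_zero ha.1.1 h0)
  have hpba : R.pairing a (R.coroot b) ≠ 0 :=
    fun h0 => hne (R.refl_comm_of_pairing_zero hb.1.1 h0).symm
  have hbr1 : ∃ kk, b kk ≠ 0 ∧ R.pairing (simpleVec kk) (R.coroot a) ≠ 0 := by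
    by_contra h
    push_neg at h
    apply hpab
    rw [pairing_eq_sum_left]
    apply Finset.sum_eq_zero
    intro kk _
    by_cases hbk : b kk = 0
    · rw [hbk, zero_mul]
    · rw [h kk hbk, mul_zero]
  have hbr2 : ∃ kk, a kk ≠ 0 ∧ R.pairing (simpleVec kk) (R.coroot b) ≠ 0 := by
    by_contra h
    push_neg at h
    apply hpba
    rw [pairing_eq_sum_left]
    apply Finset.sum_eq_zero
    intro kk _
    by_cases hak : a kk = 0
    · rw [hak, zero_mul]
    · rw [h kk hak, mul_zero]
  have hedge : ∀ {kk : Fin (n+1)} {c : AffLat n},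
      R.pairing (simpleVec kk) c ≠ 0 → ∃ jj, R.cartan jj kk ≠ 0 ∧ c jj ≠ 0 := by
    intro kk c hc
    by_contra h
    push_neg at h
    apply hc
    rw [pairing_simpleVec_left]
    apply Finset.sum_eq_zero
    intro jj _
    by_cases hA : R.cartan jj kk = 0
    · rw [hA, zero_mul]
    · rw [h jj hA, mul_zero]
  have hconn : ∀ S : Fin (n+1) → Prop, (∀ k j, S k → R.cartan j k ≠ 0 → S j) →
      ∀ x, S x → (R.coroot a + R.coroot b) x ≠ 0 →
      ∀ k, (R.coroot a + R.coroot b) k ≠ 0 → S k := by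
    intro S hS x hSx hdx
    have hsplit : ∀ m, (R.coroot a + R.coroot b) m ≠ 0 →
        (R.coroot a m ≠ 0 ∨ R.coroot b m ≠ 0) := by
      intro m hm
      rw [Pi.add_apply] at hm
      by_contra h
      push_neg at h
      rw [h.1, h.2] at hm
      omega
    -- build SuppA ∧ SuppB
    have hmain : (∀ k, R.coroot a k ≠ 0 → S k) ∧ (∀ k, R.coroot b k ≠ 0 → S k) := by
      rcases hsplit x hdx with hax | hbx
      · have SA := R.chev_conn (R.cs.length (R.refl a)) ha le_rfl S hS ⟨x, hSx, hax⟩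
        obtain ⟨kk, hbkk, hpkk⟩ := hbr1
        obtain ⟨jj, hAjj, hajj⟩ := hedge hpkk
        have hSkk : S kk := hS jj kk (SA jj hajj) (R.cartan_ne_symm hAjj)
        have hbkk' := R.coroot_supp hb.1.1 hb.1.2 kk hbkk
        have SB := R.chev_conn (R.cs.length (R.refl b)) hb le_rfl S hS ⟨kk, hSkk, hbkk'⟩
        exact ⟨SA, SB⟩
      · have SB := R.chev_conn (R.cs.length (R.refl b)) hb le_rfl S hS ⟨x, hSx, hbx⟩
        obtain ⟨kk, hakk, hpkk⟩ := hbr2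
        obtain ⟨jj, hAjj, hbjj⟩ := hedge hpkk
        have hSkk : S kk := hS jj kk (SB jj hbjj) (R.cartan_ne_symm hAjj)
        have hakk' := R.coroot_supp ha.1.1 ha.1.2 kk hakk
        have SA := R.chev_conn (R.cs.length (R.refl a)) ha le_rfl S hS ⟨kk, hSkk, hakk'⟩
        exact ⟨SA, SB⟩
    intro k hdk
    rcases hsplit k hdk with h | h
    · exact hmain.1 k h
    · exact hmain.2 k h
  -- (3) apply the PF dichotomy
  rcases R.pf_part hd hK hconn with hdone | hP0
  · exact Or.inl hdone
  -- (4) conjugation move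
  right
  obtain ⟨i, hi⟩ := R.cs.exists_rightDescent_of_ne_one (R.refl_ne_one ha.1.1)
  have hi' : R.cs.length (R.refl a * R.cs.simple i) < R.cs.length (R.refl a) := hi
  obtain ⟨hpeq, ha', hcor', hrefl', hlen2, hht⟩ := R.chev_descent ha hi' (hane i)
  have hcoord := R.chev_coroot_coord hcor'
  have hdi : (R.coroot a + R.coroot b) i ≠ 0 := by
    have hc := hcoord i
    rw [if_pos rfl] at hc
    have h1 : (0:ℤ) ≤ R.coroot (R.actR (R.cs.simple i) a) i :=
      (R.coroot_nonneg ha'.1.1 ha'.1.2) i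
    have h2 : (0:ℤ) ≤ R.coroot b i := hdb i
    rw [Pi.add_apply]
    omega
  have hq_i : R.pairing (simpleVec i) (R.coroot b) = -1 := by
    have h0 := hP0 i hdi
    rw [pairing_add_right] at h0
    omega
  have hpba2 : R.pairing b (R.coroot a) = -2 := by
    have h1 : R.pairing b (R.coroot a + R.coroot b) = 0 := by
      rw [pairing_eq_sum_left]
      apply Finset.sum_eq_zero
      intro kk _
      by_cases hbk : b kk = 0
      · rw [hbk, zero_mul]
      · have h2 := R.coroot_supp hb.1.1 hb.1.2 kk hbk
        have h3 : (R.coroot a + R.coroot b) kk ≠ 0 := by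
          have h4 : (0:ℤ) ≤ R.coroot a kk := hda kk
          have h5 : (0:ℤ) ≤ R.coroot b kk := hdb kk
          rw [Pi.add_apply]
          omega
        rw [hP0 kk h3, mul_zero]
    rw [pairing_add_right] at h1
    have h2 := R.pairing_coroot_self hb.1.1
    omega
  -- b is moved by s_i
  have hbnei : b ≠ simpleVec i := hbne i
  have hb'real : R.IsReal (R.actR (R.cs.simple i) b) := R.isReal_actR hb.1.1 _
  have hb'pos : 0 ≤ R.actR (R.cs.simple i) b := by
    obtain ⟨k0, hk0ne, hk0⟩ : ∃ k0, k0 ≠ i ∧ b k0 ≠ 0 := by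
      by_contra h'
      push_neg at h'
      exact hbnei (R.eq_simpleVec_of_supp_subset hb.1.1 hb.1.2 i h')
    have hk0pos : 1 ≤ b k0 := lt_of_le_of_ne (hb.1.2 k0) (Ne.symm hk0)
    rcases R.sign_trichotomy hb.1.1 hb.1.2 (R.cs.simple i) with ⟨hle, -, -⟩ | ⟨hge, -, -⟩
    · exfalso
      have h2 := hle k0
      rw [R.actR_simple_apply_ne i b hk0ne] at h2
      simp only [Pi.zero_apply] at h2
      omega
    · exact hge
  have hcorb' : R.coroot (R.actR (R.cs.simple i) b)
      = R.coroot b - (-1 : ℤ) • simpleVec i := by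
    rw [R.coroot_act, actC_simple', hq_i]
  have hreflb' : R.refl (R.actR (R.cs.simple i) b)
      = R.cs.simple i * R.refl b * R.cs.simple i := by
    rw [R.refl_act, R.cs.inv_simple]
  -- the vector X
  have hXv : R.actR (R.refl b) (simpleVec i) = simpleVec i + (1:ℤ) • b := by
    rw [R.actR_refl hb.1.1, hq_i, neg_smul, sub_neg_eq_add]
  have huei : R.actR (R.refl a) (simpleVec i) = simpleVec i - (1:ℤ) • a := by
    rw [R.actR_refl ha.1.1, hpeq]
  have hub : R.actR (R.refl a) b = b + (2:ℤ) • a := by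
    rw [R.actR_refl ha.1.1, hpba2, neg_smul, sub_neg_eq_add]
  have hXfull : R.actR (R.cs.simple i * (R.refl a * R.refl b)) (simpleVec i)
      = - simpleVec i + ((1:ℤ) • (R.actR (R.cs.simple i) a)
        + (1:ℤ) • (R.actR (R.cs.simple i) b)) := by
    have t1 : R.actR (R.cs.simple i) (simpleVec i - (1:ℤ) • a)
        = - simpleVec i - (1:ℤ) • R.actR (R.cs.simple i) a := by
      rw [actR_sub, actR_smul, actR_simple_simpleVec]
    have t2 : R.actR (R.cs.simple i) (b + (2:ℤ) • a)
        = R.actR (R.cs.simple i) b + (2:ℤ) • R.actR (R.cs.simple i) a := by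
      rw [R.actR_add, actR_smul]
    rw [R.actR_mul, R.actR_mul, hXv, R.actR_add, actR_smul, one_smul, huei, hub,
      R.actR_add, t1, t2]
    simp only [one_smul]
    abel
  have ha'ne : R.actR (R.cs.simple i) a ≠ 0 := by
    intro h
    exact R.actR_ne_zero ha.1.1 (R.cs.simple i) h
  have hb'ne : R.actR (R.cs.simple i) b ≠ 0 := by
    intro h
    exact R.actR_ne_zero hb.1.1 (R.cs.simple i) h
  have hXnotneg : ¬ R.actR (R.cs.simple i * (R.refl a * R.refl b)) (simpleVec i) ≤ 0 := by
    intro hle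
    have h1 := htv_nonpos_of_nonpos hle
    rw [hXfull] at h1
    rw [htv_add, htv_add, htv_neg, htv_smul, htv_smul, htv_simpleVec] at h1
    have h2 := htv_pos_of_nonneg_ne_zero ha'.1.2 ha'ne
    have h3 := htv_pos_of_nonneg_ne_zero hb'pos hb'ne
    omega
  -- lengths
  have hsu : R.cs.length (R.cs.simple i * R.refl a) + 1 = R.cs.length (R.refl a) := by
    rw [R.length_refl_simple_comm ha.1.1 i]
    exact R.length_mul_simple_of_lt hi'
  have hA1 := R.cs.length_mul_le (R.cs.simple i * R.refl a) (R.refl b)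
  rw [mul_assoc] at hA1
  have hA2 := R.length_simple_mul_ge (R.refl a * R.refl b) i
  have hA : R.cs.length (R.cs.simple i * (R.refl a * R.refl b)) + 1
      = R.cs.length (R.refl a) + R.cs.length (R.refl b) := by
    omega
  have hgt : R.cs.length (R.cs.simple i * (R.refl a * R.refl b))
      < R.cs.length ((R.cs.simple i * (R.refl a * R.refl b)) * R.cs.simple i) := by
    rcases R.sign_trichotomy (R.isReal_simple i) (simpleVec_nonneg i)
      (R.cs.simple i * (R.refl a * R.refl b)) with ⟨hle, -, -⟩ | ⟨-, -, hgt⟩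
    · exact absurd hle hXnotneg
    · rwa [R.refl_simple] at hgt
  have hBexact : R.cs.length ((R.cs.simple i * (R.refl a * R.refl b)) * R.cs.simple i)
      = R.cs.length (R.refl a) + R.cs.length (R.refl b) := by
    rcases R.cs.length_mul_simple (R.cs.simple i * (R.refl a * R.refl b)) i with h | h
    · omega
    · omega
  have hprod : R.refl (R.actR (R.cs.simple i) a) * R.refl (R.actR (R.cs.simple i) b)
      = (R.cs.simple i * (R.refl a * R.refl b)) * R.cs.simple i := by
    rw [hrefl', hreflb', R.conj_mul_conj]
  have hb'len_le : R.cs.length (R.refl (R.actR (R.cs.simple i) b))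
      ≤ R.cs.length (R.refl b) + 2 := by
    rw [hreflb']
    have h1 := R.cs.length_mul_le (R.cs.simple i * R.refl b) (R.cs.simple i)
    have h2 := R.cs.length_mul_le (R.cs.simple i) (R.refl b)
    rw [R.cs.length_simple] at h1 h2
    omega
  have hsandwich : R.cs.length (R.refl (R.actR (R.cs.simple i) a)
      * R.refl (R.actR (R.cs.simple i) b))
      = R.cs.length (R.refl a) + R.cs.length (R.refl b) := by
    rw [hprod, hBexact]
  have hmul_le := R.cs.length_mul_le (R.refl (R.actR (R.cs.simple i) a))
    (R.refl (R.actR (R.cs.simple i) b))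
  have hb'len : R.cs.length (R.refl (R.actR (R.cs.simple i) b))
      = R.cs.length (R.refl b) + 2 := by
    omega
  have hlen' : R.cs.length (R.refl (R.actR (R.cs.simple i) a)
      * R.refl (R.actR (R.cs.simple i) b))
      = R.cs.length (R.refl (R.actR (R.cs.simple i) a))
        + R.cs.length (R.refl (R.actR (R.cs.simple i) b)) := by
    omega
  have hb'chev : R.IsChevalleyRoot (R.actR (R.cs.simple i) b) := by
    refine ⟨⟨hb'real, hb'pos⟩, ?_⟩
    have h1 : htv (R.coroot (R.actR (R.cs.simple i) b)) = htv (R.coroot b) + 1 := by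
      rw [hcorb', htv_sub, htv_smul, htv_simpleVec]
      ring
    have h2 := hb.2
    rw [hb'len, h1]
    push_cast
    omega
  have hne' : R.refl (R.actR (R.cs.simple i) a) * R.refl (R.actR (R.cs.simple i) b)
      ≠ R.refl (R.actR (R.cs.simple i) b) * R.refl (R.actR (R.cs.simple i) a) := by
    rw [hrefl', hreflb', R.conj_mul_conj, R.conj_mul_conj]
    intro heq
    exact hne (mul_left_cancel (mul_right_cancel heq))
  have hsum : R.coroot (R.actR (R.cs.simple i) a) + R.coroot (R.actR (R.cs.simple i) b)
      = R.coroot a + R.coroot b := by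
    rw [hcor', hcorb']
    simp only [neg_smul, one_smul, sub_neg_eq_add]
    abel
  exact ⟨R.actR (R.cs.simple i) a, R.actR (R.cs.simple i) b, ha', hb'chev, hne', hlen',
    hsum, hlen2, by omega⟩

end Stuck

end AffineRootSystem

namespace AffineRootSystem

variable {n : ℕ} {W : Type*} [Group W] (R : AffineRootSystem n W)

section Main

lemma main_aux : ∀ N : ℕ, ∀ a b : AffLat n,
    R.IsChevalleyRoot a → R.IsChevalleyRoot b →
    R.refl a * R.refl b ≠ R.refl b * R.refl a →
    R.cs.length (R.refl a * R.refl b)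
      = R.cs.length (R.refl a) + R.cs.length (R.refl b) →
    (R.cs.length (R.refl a) + R.cs.length (R.refl b))
      * (R.cs.length (R.refl a) + R.cs.length (R.refl b))
      + R.cs.length (R.refl a) ≤ N →
    R.coroot a + R.coroot b ≤ R.imag := by
  intro N
  induction N with
  | zero =>
    intro a b ha hb hne hlen hN
    have := R.length_refl_pos ha.1.1
    omega
  | succ N ih =>
    intro a b ha hb hne hlen hN
    by_cases hla1 : R.cs.length (R.refl a) = 1
    · obtain ⟨m, ham, -⟩ := R.eq_simple_of_refl_length_one ha.1.1 ha.1.2 hla1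
      exact R.main_case_simple ha hb hne hlen ham
    by_cases hlb1 : R.cs.length (R.refl b) = 1
    · obtain ⟨m, hbm, -⟩ := R.eq_simple_of_refl_length_one hb.1.1 hb.1.2 hlb1
      exact R.main_case_simple' ha hb hne hlen hbm
    have hodda := R.length_refl_odd ha.1.1
    have hoddb := R.length_refl_odd hb.1.1
    have hla3 : 3 ≤ R.cs.length (R.refl a) := by omega
    have hlb3 : 3 ≤ R.cs.length (R.refl b) := by omega
    have hane : ∀ k, a ≠ simpleVec k := by
      intro k h
      have h2 := hla3
      rw [h, R.refl_simple, R.cs.length_simple] at h2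
      omega
    have hbne : ∀ k, b ≠ simpleVec k := by
      intro k h
      have h2 := hlb3
      rw [h, R.refl_simple, R.cs.length_simple] at h2
      omega
    by_cases hQ : ∃ i, R.cs.length (R.refl a * R.cs.simple i) < R.cs.length (R.refl a)
        ∧ R.pairing (simpleVec i) (R.coroot b) = 0
    · -- reduce on the a-side
      obtain ⟨i, hi, hq0⟩ := hQ
      obtain ⟨ha', hne'', hlen'', hlen2, hcor', hpeq⟩ :=
        R.move_q0 ha hb hne hlen hi (hane i) hq0
      have hmeas : (R.cs.length (R.refl (R.actR (R.cs.simple i) a))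
          + R.cs.length (R.refl b))
          * (R.cs.length (R.refl (R.actR (R.cs.simple i) a)) + R.cs.length (R.refl b))
          + R.cs.length (R.refl (R.actR (R.cs.simple i) a)) ≤ N := by
        have hx2 : R.cs.length (R.refl (R.actR (R.cs.simple i) a)) + R.cs.length (R.refl b)
            = (R.cs.length (R.refl a) + R.cs.length (R.refl b)) - 2 := by omega
        rw [hx2]
        have hsq := sq_sub_le (R.cs.length (R.refl a) + R.cs.length (R.refl b))
        omega
      have hIH := ih _ _ ha' hb hne'' hlen'' hmeas
      have hIH' := hIH
      rw [Pi.le_def] at hIH'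
      have hz0 : (0:AffLat n)
          ≤ R.imag - (R.coroot (R.actR (R.cs.simple i) a) + R.coroot b) :=
        sub_nonneg.mpr hIH
      have hpm1 : R.pairing (simpleVec i) (R.coroot (R.actR (R.cs.simple i) a)) = -1 := by
        rw [hcor', pairing_sub_right, pairing_smul_right, pairing_simple_simple, hpeq]
        ring
      have hpz : 1 ≤ R.pairing (simpleVec i)
          (R.imag - (R.coroot (R.actR (R.cs.simple i) a) + R.coroot b)) := by
        rw [pairing_sub_right, pairing_simpleVec_imag, pairing_add_right, hpm1, hq0]
        norm_num
      have hzi := R.coord_pos_of_pairing_pos hz0 hpz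
      rw [Pi.sub_apply, Pi.add_apply] at hzi
      have hcoord := R.chev_coroot_coord hcor'
      rw [Pi.le_def]
      intro k
      have h2 : R.coroot (R.actR (R.cs.simple i) a) k + R.coroot b k ≤ R.imag k := by
        have h3 := hIH' k
        rwa [Pi.add_apply] at h3
      have h3 := hcoord k
      rw [Pi.add_apply]
      by_cases h : k = i
      · subst h
        rw [if_pos rfl] at h3
        omega
      · rw [if_neg h] at h3
        omega
    by_cases hP : ∃ j, R.cs.length (R.refl b * R.cs.simple j) < R.cs.length (R.refl b)
        ∧ R.pairing (simpleVec j) (R.coroot a) = 0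
    · -- reduce on the b-side
      obtain ⟨j, hj, hp0⟩ := hP
      obtain ⟨hb', hne'', hlen'', hlen2, hcorb', hpeq⟩ :=
        R.move_q0' ha hb hne hlen hj (hbne j) hp0
      have hmeas : (R.cs.length (R.refl a)
          + R.cs.length (R.refl (R.actR (R.cs.simple j) b)))
          * (R.cs.length (R.refl a) + R.cs.length (R.refl (R.actR (R.cs.simple j) b)))
          + R.cs.length (R.refl a) ≤ N := by
        have hx2 : R.cs.length (R.refl a) + R.cs.length (R.refl (R.actR (R.cs.simple j) b))
            = (R.cs.length (R.refl a) + R.cs.length (R.refl b)) - 2 := by omega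
        rw [hx2]
        have hsq := sq_sub_lt (R.cs.length (R.refl a) + R.cs.length (R.refl b)) (by omega)
        omega
      have hIH := ih _ _ ha hb' hne'' hlen'' hmeas
      have hIH' := hIH
      rw [Pi.le_def] at hIH'
      have hz0 : (0:AffLat n)
          ≤ R.imag - (R.coroot a + R.coroot (R.actR (R.cs.simple j) b)) :=
        sub_nonneg.mpr hIH
      have hpm1 : R.pairing (simpleVec j) (R.coroot (R.actR (R.cs.simple j) b)) = -1 := by
        rw [hcorb', pairing_sub_right, pairing_smul_right, pairing_simple_simple, hpeq]
        ring
      have hpz : 1 ≤ R.pairing (simpleVec j)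
          (R.imag - (R.coroot a + R.coroot (R.actR (R.cs.simple j) b))) := by
        rw [pairing_sub_right, pairing_simpleVec_imag, pairing_add_right, hpm1, hp0]
        norm_num
      have hzi := R.coord_pos_of_pairing_pos hz0 hpz
      rw [Pi.sub_apply, Pi.add_apply] at hzi
      have hcoord := R.chev_coroot_coord hcorb'
      rw [Pi.le_def]
      intro k
      have h2 : R.coroot a k + R.coroot (R.actR (R.cs.simple j) b) k ≤ R.imag k := by
        have h3 := hIH' k
        rwa [Pi.add_apply] at h3
      have h3 := hcoord k
      rw [Pi.add_apply]
      by_cases h : k = j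
      · subst h
        rw [if_pos rfl] at h3
        omega
      · rw [if_neg h] at h3
        omega
    · -- stuck case
      push_neg at hQ hP
      have hQ' : ∀ i, R.cs.length (R.refl a * R.cs.simple i) < R.cs.length (R.refl a) →
          R.pairing (simpleVec i) (R.coroot b) ≠ 0 := fun i hd => hQ i hd
      have hP' : ∀ j, R.cs.length (R.refl b * R.cs.simple j) < R.cs.length (R.refl b) →
          R.pairing (simpleVec j) (R.coroot a) ≠ 0 := fun j hd => hP j hd
      rcases R.stuck_case ha hb hne hlen hla3 hlb3 hQ' hP' with hdone |
        ⟨a', b', ha', hb', hne', hlen', hsum, hlen2, hsums⟩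
      · exact hdone
      · have hmeas : (R.cs.length (R.refl a') + R.cs.length (R.refl b'))
            * (R.cs.length (R.refl a') + R.cs.length (R.refl b'))
            + R.cs.length (R.refl a') ≤ N := by
          rw [hsums]
          omega
        have hIH := ih _ _ ha' hb' hne' hlen' hmeas
        rw [hsum] at hIH
        exact hIH

end Main

end AffineRootSystem

/-- Let `α, β` be positive real affine roots with
`ℓ(s_α) = 2 ht(α∨) - 1` and `ℓ(s_β) = 2 ht(β∨) - 1`, such that `s_α s_β ≠ s_β s_α`,
`ℓ(s_α s_β) = ℓ(s_α) + ℓ(s_β)`, and `α∨ + β∨` is not strictly less than the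
imaginary coroot `c` in the dominance order.  Then `α∨ + β∨ = c`. -/
theorem sum_coroot_eq_imag {n : ℕ} {W : Type*} [Group W]
    (R : AffineRootSystem n W) (a b : AffLat n)
    (ha : R.IsChevalleyRoot a) (hb : R.IsChevalleyRoot b)
    (hne : R.refl a * R.refl b ≠ R.refl b * R.refl a)
    (hlen : R.cs.length (R.refl a * R.refl b)
        = R.cs.length (R.refl a) + R.cs.length (R.refl b))
    (hnlt : ¬ (R.coroot a + R.coroot b < R.imag)) :
    R.coroot a + R.coroot b = R.imag := by
  have hle := R.main_aux ((R.cs.length (R.refl a) + R.cs.length (R.refl b))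
      * (R.cs.length (R.refl a) + R.cs.length (R.refl b)) + R.cs.length (R.refl a))
    a b ha hb hne hlen le_rfl
  by_contra hne2
  exact hnlt (lt_of_le_of_ne hle hne2)
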